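/- arXiv:2508.03667 — 2 statements merged into one kernel-verified Lean document; each statement's English description precedes it below -/
import Mathlib

section
/- Let R be a Γ-graded ring such that the right R-module R is gr-noetherian (resp. gr-artinian), and let M be a Γ-graded right R-module. If M is finitely generated, then M is gr-noetherian (resp. gr-artinian). -/
open CategoryTheory

universe u

instance addSubgroupNormalOfComm {M : Type*} [AddCommGroup M] (N : AddSubgroup M) :
    N.Normal := ⟨fun n hn g => by simpa [add_comm] using hn⟩

variable {Γ : Type u} [Groupoid.{u} Γ]

/-- The morphisms of the groupoid `Γ`, bundled together with their endpoints.
For `γ : GrIdx Γ`, the morphism `γ.2.2 : γ.1 ⟶ γ.2.1` has domain `d(γ) = γ.1`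
and range `r(γ) = γ.2.1`. -/
abbrev GrIdx (Γ : Type u) [Groupoid.{u} Γ] : Type u := Σ e f : Γ, e ⟶ f

/-- The data of a `Γ`-grading, a multiplication, and local units `1_e` on an
additive group `R`. -/
structure GRingData (Γ : Type u) [Groupoid.{u} Γ] (R : Type u) [AddCommGroup R] :
    Type u where
  mul : R → R → R
  component : ∀ {e f : Γ}, (e ⟶ f) → AddSubgroup R
  one : Γ → R

/-- The data of a right scalar multiplication by `R` and a `Γ`-grading on an
additive group `M`. -/
structure GModData (Γ : Type u) [Groupoid.{u} Γ] (R : Type u) (M : Type u)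
    [AddCommGroup M] : Type u where
  smul : M → R → M
  component : ∀ {e f : Γ}, (e ⟶ f) → AddSubgroup M

namespace GRingData

variable {R : Type u} [AddCommGroup R]

/-- `𝒜` makes `R` an (object unital) `Γ`-graded ring: `R` is an associative ring,
`R = ⊕_γ R_γ`, `R_γ R_δ ⊆ R_{γδ}` when `γδ` is defined and `R_γ R_δ = 0` otherwise,
each `R_e` (`e ∈ Γ₀`) is unital with identity `1_e`, and
`1_{r(γ)} a = a 1_{d(γ)} = a` for all `a ∈ R_γ`. -/
structure IsObjectUnital (𝒜 : GRingData Γ R) : Prop where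
  mul_assoc : ∀ a b c : R, 𝒜.mul (𝒜.mul a b) c = 𝒜.mul a (𝒜.mul b c)
  left_distrib : ∀ a b c : R, 𝒜.mul a (b + c) = 𝒜.mul a b + 𝒜.mul a c
  right_distrib : ∀ a b c : R, 𝒜.mul (a + b) c = 𝒜.mul a c + 𝒜.mul b c
  decompose : ∀ x : R, ∃ (s : Finset (GrIdx Γ)) (cf : GrIdx Γ → R),
      (∀ γ ∈ s, cf γ ∈ 𝒜.component γ.2.2) ∧ x = ∑ γ ∈ s, cf γ
  independent : ∀ (s : Finset (GrIdx Γ)) (cf : GrIdx Γ → R),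
      (∀ γ ∈ s, cf γ ∈ 𝒜.component γ.2.2) → ∑ γ ∈ s, cf γ = 0 → ∀ γ ∈ s, cf γ = 0
  mul_mem : ∀ {e f g : Γ} (γ : e ⟶ f) (δ : g ⟶ e) {a b : R},
      a ∈ 𝒜.component γ → b ∈ 𝒜.component δ → 𝒜.mul a b ∈ 𝒜.component (δ ≫ γ)
  mul_eq_zero : ∀ {e f g h : Γ} (γ : e ⟶ f) (δ : g ⟶ h) {a b : R},
      h ≠ e → a ∈ 𝒜.component γ → b ∈ 𝒜.component δ → 𝒜.mul a b = 0
  one_mem : ∀ e : Γ, 𝒜.one e ∈ 𝒜.component (𝟙 e)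
  one_mul : ∀ {e f : Γ} (γ : e ⟶ f) {a : R}, a ∈ 𝒜.component γ → 𝒜.mul (𝒜.one f) a = a
  mul_one : ∀ {e f : Γ} (γ : e ⟶ f) {a : R}, a ∈ 𝒜.component γ → 𝒜.mul a (𝒜.one e) = a

/-- `R` regarded as a (`Γ`-graded) right module over itself. -/
def toMod (𝒜 : GRingData Γ R) : GModData Γ R R where
  smul := 𝒜.mul
  component := fun γ => 𝒜.component γ

end GRingData

namespace GModData

variable {R : Type u} {M : Type u} {M' : Type u} [AddCommGroup M] [AddCommGroup M']

/-- `ℳ` makes `M` a unital `Γ`-graded right module over the `Γ`-graded ring `𝒜`: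
`M` is a right `R`-module, `M = ⊕_γ M_γ`, `M_σ R_τ ⊆ M_{στ}` when `στ` is defined
and `M_σ R_τ = 0` otherwise, and `m 1_{d(σ)} = m` for all `m ∈ M_σ`. -/
structure IsGraded [AddCommGroup R] (𝒜 : GRingData Γ R) (ℳ : GModData Γ R M) :
    Prop where
  add_smul : ∀ (m n : M) (a : R), ℳ.smul (m + n) a = ℳ.smul m a + ℳ.smul n a
  smul_add : ∀ (m : M) (a b : R), ℳ.smul m (a + b) = ℳ.smul m a + ℳ.smul m b
  smul_mul : ∀ (m : M) (a b : R), ℳ.smul m (𝒜.mul a b) = ℳ.smul (ℳ.smul m a) b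
  decompose : ∀ x : M, ∃ (s : Finset (GrIdx Γ)) (cf : GrIdx Γ → M),
      (∀ γ ∈ s, cf γ ∈ ℳ.component γ.2.2) ∧ x = ∑ γ ∈ s, cf γ
  independent : ∀ (s : Finset (GrIdx Γ)) (cf : GrIdx Γ → M),
      (∀ γ ∈ s, cf γ ∈ ℳ.component γ.2.2) → ∑ γ ∈ s, cf γ = 0 → ∀ γ ∈ s, cf γ = 0
  smul_mem : ∀ {e f g : Γ} (σ : e ⟶ f) (τ : g ⟶ e) {m : M} {a : R},
      m ∈ ℳ.component σ → a ∈ 𝒜.component τ → ℳ.smul m a ∈ ℳ.component (τ ≫ σ)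
  smul_eq_zero : ∀ {e f g h : Γ} (σ : e ⟶ f) (τ : g ⟶ h) {m : M} {a : R},
      h ≠ e → m ∈ ℳ.component σ → a ∈ 𝒜.component τ → ℳ.smul m a = 0
  smul_one : ∀ {e f : Γ} (σ : e ⟶ f) {m : M}, m ∈ ℳ.component σ →
      ℳ.smul m (𝒜.one e) = m

/-- An element of `M` is homogeneous if it belongs to some homogeneous component. -/
def IsHomogeneous (ℳ : GModData Γ R M) (m : M) : Prop :=
  ∃ (e f : Γ) (γ : e ⟶ f), m ∈ ℳ.component γ

/-- `N` is a graded submodule of `M`: a submodule (subgroup closed under the right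
`R`-action) generated by its homogeneous elements, i.e. `N = ⊕_γ (N ∩ M_γ)`. -/
def IsGrSub (ℳ : GModData Γ R M) (N : AddSubgroup M) : Prop :=
  (∀ m ∈ N, ∀ a : R, ℳ.smul m a ∈ N) ∧
  ∀ n ∈ N, n ∈ AddSubgroup.closure {x : M | x ∈ N ∧ ℳ.IsHomogeneous x}

/-- `M` is gr-noetherian: there is no strictly increasing infinite chain of graded
submodules. -/
def GrNoetherian (ℳ : GModData Γ R M) : Prop :=
  ¬ ∃ c : ℕ → AddSubgroup M, (∀ n, ℳ.IsGrSub (c n)) ∧ ∀ n, c n < c (n + 1)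

/-- `M` is gr-artinian: there is no strictly decreasing infinite chain of graded
submodules. -/
def GrArtinian (ℳ : GModData Γ R M) : Prop :=
  ¬ ∃ c : ℕ → AddSubgroup M, (∀ n, ℳ.IsGrSub (c n)) ∧ ∀ n, c (n + 1) < c n

/-- The `R`-submodule of `M` generated by a set `X`. -/
def rClosure (ℳ : GModData Γ R M) (X : Set M) : AddSubgroup M :=
  sInf {N : AddSubgroup M | X ⊆ N ∧ ∀ m ∈ N, ∀ a : R, ℳ.smul m a ∈ N}

/-- `M` is finitely generated (as a right `R`-module). -/
def FG (ℳ : GModData Γ R M) : Prop := ∃ s : Finset M, ℳ.rClosure ↑s = ⊤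

/-- The submodule `N` of `M` is finitely generated. -/
def FGSub (ℳ : GModData Γ R M) (N : AddSubgroup M) : Prop :=
  ∃ s : Finset M, ↑s ⊆ (N : Set M) ∧ ℳ.rClosure ↑s = N

/-- `M` is finitely gr-cogenerated: every family of graded submodules with zero
intersection has a finite subfamily with zero intersection. -/
def FinGrCogenerated (ℳ : GModData Γ R M) : Prop :=
  ∀ S : Set (AddSubgroup M), (∀ N ∈ S, ℳ.IsGrSub N) → sInf S = ⊥ →
    ∃ t : Finset (AddSubgroup M), ↑t ⊆ S ∧ t.inf id = ⊥

/-- The quotient module `M/N`, with grading `(M/N)_γ = (M_γ + N)/N`. -/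
noncomputable def quot (ℳ : GModData Γ R M) (N : AddSubgroup M) :
    GModData Γ R (M ⧸ N) where
  smul x a := QuotientAddGroup.mk (ℳ.smul (Quotient.out x) a)
  component := fun γ => (ℳ.component γ).map (QuotientAddGroup.mk' N)

open scoped Classical in
/-- The submodule `N`, regarded as a `Γ`-graded right `R`-module. -/
noncomputable def restrict (ℳ : GModData Γ R M) (N : AddSubgroup M) :
    GModData Γ R ↥N where
  smul m a := if h : ℳ.smul (↑m) a ∈ N then ⟨ℳ.smul (↑m) a, h⟩ else 0
  component := fun γ => (ℳ.component γ).addSubgroupOf N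

/-- The subquotient module `P/N` (for `N ≤ P` graded submodules of `M`). -/
noncomputable def subquot (ℳ : GModData Γ R M) (N P : AddSubgroup M) :
    GModData Γ R (↥P ⧸ N.addSubgroupOf P) :=
  (ℳ.restrict P).quot (N.addSubgroupOf P)

/-- `M(e) = ⊕_{r(γ) = e} M_γ`, for `e ∈ Γ₀`. -/
def part (ℳ : GModData Γ R M) (e : Γ) : AddSubgroup M :=
  ⨆ (f : Γ) (γ : f ⟶ e), ℳ.component γ

/-- `Γ'₀(M) = {e ∈ Γ₀ : M(e) ≠ 0}`. -/
def partSupport (ℳ : GModData Γ R M) : Set Γ := {e : Γ | ℳ.part e ≠ ⊥}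

/-- `M` is `Γ₀`-noetherian: `M(e)` is gr-noetherian for every `e ∈ Γ₀`. -/
def G0Noetherian (ℳ : GModData Γ R M) : Prop :=
  ∀ e : Γ, (ℳ.restrict (ℳ.part e)).GrNoetherian

/-- `M` is `Γ₀`-artinian: `M(e)` is gr-artinian for every `e ∈ Γ₀`. -/
def G0Artinian (ℳ : GModData Γ R M) : Prop :=
  ∀ e : Γ, (ℳ.restrict (ℳ.part e)).GrArtinian

/-- `M` is gr-simple: `M ≠ 0` and its only graded submodules are `0` and `M`. -/
def IsGrSimple (ℳ : GModData Γ R M) : Prop :=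
  (⊤ : AddSubgroup M) ≠ ⊥ ∧ ∀ N : AddSubgroup M, ℳ.IsGrSub N → N = ⊥ ∨ N = ⊤

/-- `N` is a gr-simple graded submodule of `M`. -/
def IsGrSimpleSub (ℳ : GModData Γ R M) (N : AddSubgroup M) : Prop :=
  ℳ.IsGrSub N ∧ N ≠ ⊥ ∧
    ∀ L : AddSubgroup M, ℳ.IsGrSub L → L ≤ N → L = ⊥ ∨ L = N

/-- `N` is a gr-maximal graded submodule of `M`. -/
def IsGrMaximalSub (ℳ : GModData Γ R M) (N : AddSubgroup M) : Prop :=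
  ℳ.IsGrSub N ∧ N ≠ ⊤ ∧
    ∀ L : AddSubgroup M, ℳ.IsGrSub L → N ≤ L → L = N ∨ L = ⊤

/-- The graded Jacobson radical of `M`: the intersection of all gr-maximal graded
submodules of `M` (equal to `M` when there are none). -/
def grRad (ℳ : GModData Γ R M) : AddSubgroup M := sInf {N | ℳ.IsGrMaximalSub N}

/-- The gr-socle of `M`: the sum of all gr-simple graded submodules of `M`
(equal to `0` when there are none). -/
def grSoc (ℳ : GModData Γ R M) : AddSubgroup M := sSup {N | ℳ.IsGrSimpleSub N}

/-- `N` is gr-superfluous in `M`. -/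
def GrSuperfluous (ℳ : GModData Γ R M) (N : AddSubgroup M) : Prop :=
  ∀ X : AddSubgroup M, ℳ.IsGrSub X → N ⊔ X = ⊤ → X = ⊤

/-- `N` is gr-essential in `M`. -/
def GrEssential (ℳ : GModData Γ R M) (N : AddSubgroup M) : Prop :=
  ∀ X : AddSubgroup M, ℳ.IsGrSub X → N ⊓ X = ⊥ → X = ⊥

/-- `M` is gr-semisimple: the sum of all gr-simple graded submodules is `M`. -/
def GrSemisimple (ℳ : GModData Γ R M) : Prop :=
  sSup {N : AddSubgroup M | ℳ.IsGrSimpleSub N} = ⊤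

/-- `c 0 = 0 ⊆ c 1 ⊆ ⋯ ⊆ c n = M` is a gr-composition series of `M` of length `n`. -/
def IsGrCompSeries (ℳ : GModData Γ R M) (n : ℕ) (c : ℕ → AddSubgroup M) : Prop :=
  c 0 = ⊥ ∧ c n = ⊤ ∧ (∀ i, i ≤ n → ℳ.IsGrSub (c i)) ∧
  (∀ i, i < n → c i ≤ c (i + 1)) ∧
  ∀ i, i < n → (ℳ.subquot (c i) (c (i + 1))).IsGrSimple

/-- `M` has finite gr-length: it admits a gr-composition series. -/
def FiniteGrLength (ℳ : GModData Γ R M) : Prop := ∃ n c, ℳ.IsGrCompSeries n c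

/-- `g : M → M'` is a gr-homomorphism of graded right `R`-modules. -/
def IsGrHom (ℳ : GModData Γ R M) (𝒩 : GModData Γ R M') (g : M → M') : Prop :=
  (∀ m n : M, g (m + n) = g m + g n) ∧
  (∀ (m : M) (a : R), g (ℳ.smul m a) = 𝒩.smul (g m) a) ∧
  ∀ (e f : Γ) (σ : e ⟶ f), ∀ m ∈ ℳ.component σ, g m ∈ 𝒩.component σ

/-- `M` and `M'` are gr-isomorphic (there is a bijective gr-homomorphism). -/
def GrIso (ℳ : GModData Γ R M) (𝒩 : GModData Γ R M') : Prop :=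
  ∃ g : M → M', IsGrHom ℳ 𝒩 g ∧ Function.Bijective g

/-- `g : M → M'` is a homomorphism of degree `γ` (where `γ : e ⟶ f`, i.e.
`d(γ) = e`): `g(M_σ) ⊆ M'_{γσ}` when `γσ` is defined and `g(M_σ) = 0` otherwise. -/
def IsHomOfDeg (ℳ : GModData Γ R M) (𝒩 : GModData Γ R M') {e f : Γ} (γ : e ⟶ f)
    (g : M → M') : Prop :=
  (∀ m n : M, g (m + n) = g m + g n) ∧
  (∀ (m : M) (a : R), g (ℳ.smul m a) = 𝒩.smul (g m) a) ∧
  (∀ (a : Γ) (σ : a ⟶ e), ∀ m ∈ ℳ.component σ, g m ∈ 𝒩.component (σ ≫ γ)) ∧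
  (∀ (a b : Γ) (σ : a ⟶ b), b ≠ e → ∀ m ∈ ℳ.component σ, g m = 0)

/-- `MJ`: the submodule of `M` consisting of finite sums of elements `m a`,
`m ∈ M`, `a ∈ J`. -/
def smulSet [AddCommGroup R] (ℳ : GModData Γ R M) (J : AddSubgroup R) : AddSubgroup M :=
  AddSubgroup.closure {x : M | ∃ (m : M) (a : R), a ∈ J ∧ x = ℳ.smul m a}

open scoped Classical in
/-- The direct sum `⊕_{j ∈ J} M_j` of graded right modules, with grading
`(⊕_j M_j)_γ = ⊕_j (M_j)_γ`. -/
noncomputable def dsum {J : Type u} {Mf : J → Type u} [∀ j, AddCommGroup (Mf j)]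
    (df : ∀ j, GModData Γ R (Mf j)) : GModData Γ R (Π₀ j, Mf j) where
  smul m a :=
    if h : ∃ y : Π₀ j, Mf j, ∀ j, y j = (df j).smul (m j) a then h.choose else 0
  component := fun γ => ⨅ j : J, ((df j).component γ).comap (DFinsupp.evalAddMonoidHom j)

/-- A descending chain of graded submodules is tight if
`Γ'₀(M_i/M_{i+1}) ⊇ Γ'₀(M_{i+1}/M_{i+2})` for all `i`. -/
def TightDesc (ℳ : GModData Γ R M) (c : ℕ → AddSubgroup M) : Prop :=
  (∀ i, ℳ.IsGrSub (c i)) ∧ (∀ i, c (i + 1) ≤ c i) ∧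
  ∀ i, (ℳ.subquot (c (i + 2)) (c (i + 1))).partSupport ⊆
    (ℳ.subquot (c (i + 1)) (c i)).partSupport

/-- An ascending chain of graded submodules is tight if
`Γ'₀(M_{i+1}/M_i) ⊇ Γ'₀(M_{i+2}/M_{i+1})` for all `i`. -/
def TightAsc (ℳ : GModData Γ R M) (c : ℕ → AddSubgroup M) : Prop :=
  (∀ i, ℳ.IsGrSub (c i)) ∧ (∀ i, c i ≤ c (i + 1)) ∧
  ∀ i, (ℳ.subquot (c (i + 1)) (c (i + 2))).partSupport ⊆
    (ℳ.subquot (c i) (c (i + 1))).partSupport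

/-- `M` is strongly `Γ₀`-artinian: every tight descending chain of graded
submodules stabilizes. -/
def StronglyG0Artinian (ℳ : GModData Γ R M) : Prop :=
  ∀ c : ℕ → AddSubgroup M, ℳ.TightDesc c → ∃ n, ∀ m, n ≤ m → c m = c n

/-- `M` is strongly `Γ₀`-noetherian: every tight ascending chain of graded
submodules stabilizes. -/
def StronglyG0Noetherian (ℳ : GModData Γ R M) : Prop :=
  ∀ c : ℕ → AddSubgroup M, ℳ.TightAsc c → ∃ n, ∀ m, n ≤ m → c m = c n

end GModData

/-- `E` is a gr-injective graded right `R`-module: for all graded right `R`-modules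
`M`, `N`, every injective gr-homomorphism `g : N → M` and every gr-homomorphism
`h : N → E`, there is a gr-homomorphism `h' : M → E` with `h' ∘ g = h`. -/
def GrInjective {R : Type u} [AddCommGroup R] (𝒜 : GRingData Γ R) {E : Type u}
    [AddCommGroup E] (ℰ : GModData Γ R E) : Prop :=
  ∀ (M N : Type u) [AddCommGroup M] [AddCommGroup N]
    (ℳ : GModData Γ R M) (𝒩 : GModData Γ R N),
    ℳ.IsGraded 𝒜 → 𝒩.IsGraded 𝒜 →
    ∀ g : N → M, GModData.IsGrHom 𝒩 ℳ g → Function.Injective g →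
    ∀ h : N → E, GModData.IsGrHom 𝒩 ℰ h →
    ∃ h' : M → E, GModData.IsGrHom ℳ ℰ h' ∧ ∀ y : N, h' (g y) = h y

/-- A bundled `Γ`-graded right module over the graded ring `𝒜`. -/
structure GrModule (Γ : Type u) [Groupoid.{u} Γ] {R : Type u} [AddCommGroup R]
    (𝒜 : GRingData Γ R) : Type (u + 1) where
  carrier : Type u
  [addCommGroup : AddCommGroup carrier]
  data : GModData Γ R carrier
  graded : data.IsGraded 𝒜

attribute [instance] GrModule.addCommGroup

namespace GRingData

variable {R : Type u} [AddCommGroup R]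

/-- `R` is right `Γ₀`-noetherian. -/
def RightG0Noetherian (𝒜 : GRingData Γ R) : Prop := 𝒜.toMod.G0Noetherian

/-- `R` is right `Γ₀`-artinian. -/
def RightG0Artinian (𝒜 : GRingData Γ R) : Prop := 𝒜.toMod.G0Artinian

/-- The principal right ideal `aR`. -/
def principal (𝒜 : GRingData Γ R) (a : R) : AddSubgroup R :=
  AddSubgroup.closure {x : R | ∃ b : R, x = 𝒜.mul a b}

/-- A gr-principal graded right ideal: one of the form `aR` with `a` homogeneous. -/
def IsGrPrincipal (𝒜 : GRingData Γ R) (N : AddSubgroup R) : Prop :=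
  ∃ a : R, 𝒜.toMod.IsHomogeneous a ∧ N = 𝒜.principal a

/-- `N` is a graded left ideal of `R`, i.e. a graded submodule of `_R R`. -/
def IsGrLeftIdeal (𝒜 : GRingData Γ R) (N : AddSubgroup R) : Prop :=
  (∀ m ∈ N, ∀ a : R, 𝒜.mul a m ∈ N) ∧
  ∀ n ∈ N, n ∈ AddSubgroup.closure {x : R | x ∈ N ∧ 𝒜.toMod.IsHomogeneous x}

/-- `N` is a gr-maximal graded left ideal of `R`. -/
def IsGrMaxLeftIdeal (𝒜 : GRingData Γ R) (N : AddSubgroup R) : Prop :=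
  𝒜.IsGrLeftIdeal N ∧ N ≠ ⊤ ∧
    ∀ L : AddSubgroup R, 𝒜.IsGrLeftIdeal L → N ≤ L → L = N ∨ L = ⊤

/-- The graded Jacobson radical of `R` as a left module over itself:
the intersection of all gr-maximal graded left ideals. -/
def lRad (𝒜 : GRingData Γ R) : AddSubgroup R := sInf {N | 𝒜.IsGrMaxLeftIdeal N}

/-- `N` is a graded (two-sided) ideal of `R`. -/
def IsGrIdeal (𝒜 : GRingData Γ R) (N : AddSubgroup R) : Prop :=
  𝒜.toMod.IsGrSub N ∧ ∀ m ∈ N, ∀ a : R, 𝒜.mul a m ∈ N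

/-- `N ⊆ R_e` is a left ideal of the unital ring `R_e`. -/
def IsLeftIdealIn (𝒜 : GRingData Γ R) (e : Γ) (N : Set R) : Prop :=
  N ⊆ (𝒜.component (𝟙 e) : Set R) ∧ (0 : R) ∈ N ∧
  (∀ a ∈ N, ∀ b ∈ N, a - b ∈ N) ∧
  ∀ r ∈ 𝒜.component (𝟙 e), ∀ a ∈ N, 𝒜.mul r a ∈ N

/-- `N` is a maximal left ideal of the unital ring `R_e`. -/
def IsMaxLeftIdealIn (𝒜 : GRingData Γ R) (e : Γ) (N : Set R) : Prop :=
  𝒜.IsLeftIdealIn e N ∧ N ≠ (𝒜.component (𝟙 e) : Set R) ∧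
  ∀ L : Set R, 𝒜.IsLeftIdealIn e L → N ⊆ L →
    L = N ∨ L = (𝒜.component (𝟙 e) : Set R)

/-- The Jacobson radical `rad(R_e)` of the unital ring `R_e`, as a subset of `R`:
the intersection of all maximal left ideals of `R_e`. -/
def radIn (𝒜 : GRingData Γ R) (e : Γ) : Set R :=
  (𝒜.component (𝟙 e) : Set R) ∩ ⋂₀ {N : Set R | 𝒜.IsMaxLeftIdealIn e N}

/-- The quotient graded ring `R/I` of `R` by a graded ideal `I`. -/
noncomputable def quotRing (𝒜 : GRingData Γ R) (I : AddSubgroup R) :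
    GRingData Γ (R ⧸ I) where
  mul x y := QuotientAddGroup.mk (𝒜.mul (Quotient.out x) (Quotient.out y))
  component := fun γ => (𝒜.component γ).map (QuotientAddGroup.mk' I)
  one e := QuotientAddGroup.mk (𝒜.one e)

/-- `R` is a gr-semisimple ring. -/
def GrSemisimpleRing (𝒜 : GRingData Γ R) : Prop := 𝒜.toMod.GrSemisimple

/-- `R` is gr-semilocal: the `Γ`-graded ring `R/rad^gr(R)` is gr-semisimple. -/
noncomputable def GrSemilocal (𝒜 : GRingData Γ R) : Prop :=
  ((𝒜.quotRing 𝒜.toMod.grRad).GrSemisimpleRing)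

end GRingData

/-! Choose homogeneous generators `v₀, …, v_{k-1}` of `M` and put `Sᵢ = v₀R + ⋯ + v_{i-1}R`.
Send a graded submodule `N` to the graded right ideals `Jᵢ(N) = {a | vᵢ a ∈ N + Sᵢ}`, `i < k`.
This map is strictly monotone: if `N ≤ N'` and `Jᵢ(N') ≤ Jᵢ(N)` for all `i`, then
`N' ∩ Sᵢ ≤ N` by induction on `i`, since an element `s + vᵢ a` of `N' ∩ S_{i+1}` has
`a ∈ Jᵢ(N') ≤ Jᵢ(N)`. So `M` inherits the ascending (descending) chain condition on graded
submodules from the finite power `(graded right ideals of R)ᵏ`. -/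

namespace GModData

variable {R M : Type u} [AddCommGroup M] {ℳ : GModData Γ R M}

abbrev GrSubmodule (ℳ : GModData Γ R M) : Type u := {N : AddSubgroup M // ℳ.IsGrSub N}

theorem grNoetherian_iff_wellFoundedGT : ℳ.GrNoetherian ↔ WellFoundedGT ℳ.GrSubmodule := by
  refine ⟨fun h => ⟨RelEmbedding.wellFounded_iff_isEmpty.2 ⟨fun f => h ?_⟩⟩, ?_⟩
  · exact ⟨fun n => (f n).1, fun n => (f n).2, fun n => f.map_rel_iff.2 n.lt_succ_self⟩
  · rintro h ⟨c, hc, hlt⟩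
    exact not_strictMono_of_wellFoundedGT (fun n => (⟨c n, hc n⟩ : ℳ.GrSubmodule))
      (strictMono_nat_of_lt_succ hlt)

theorem grArtinian_iff_wellFoundedLT : ℳ.GrArtinian ↔ WellFoundedLT ℳ.GrSubmodule := by
  refine ⟨fun h => ⟨RelEmbedding.wellFounded_iff_isEmpty.2 ⟨fun f => h ?_⟩⟩, ?_⟩
  · exact ⟨fun n => (f n).1, fun n => (f n).2, fun n => f.map_rel_iff.2 n.lt_succ_self⟩
  · rintro h ⟨c, hc, hlt⟩
    exact not_strictAnti_of_wellFoundedLT (fun n => (⟨c n, hc n⟩ : ℳ.GrSubmodule))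
      (strictAnti_nat_of_succ_lt hlt)

theorem exists_finsupp_of_mem_closure {N : AddSubgroup M} {x : M}
    (hx : x ∈ AddSubgroup.closure {y | y ∈ N ∧ ℳ.IsHomogeneous y}) :
    ∃ d : GrIdx Γ →₀ M, (∀ γ, d γ ∈ ℳ.component γ.2.2 ∧ d γ ∈ N) ∧
      (d.sum fun _ m => m) = x := by
  classical
  induction hx using AddSubgroup.closure_induction with
  | mem y hy =>
    obtain ⟨hyN, e, f, γ, hyγ⟩ := hy
    refine ⟨Finsupp.single ⟨e, f, γ⟩ y, fun δ => ?_, Finsupp.sum_single_index rfl⟩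
    rw [Finsupp.single_apply]
    split_ifs with h
    · subst h; exact ⟨hyγ, hyN⟩
    · exact ⟨zero_mem _, zero_mem _⟩
  | zero => exact ⟨0, fun _ => ⟨zero_mem _, zero_mem _⟩, Finsupp.sum_zero_index⟩
  | add y z _ _ hy hz =>
    obtain ⟨d₁, hd₁, rfl⟩ := hy
    obtain ⟨d₂, hd₂, rfl⟩ := hz
    exact ⟨d₁ + d₂, fun γ => ⟨add_mem (hd₁ γ).1 (hd₂ γ).1, add_mem (hd₁ γ).2 (hd₂ γ).2⟩,
      Finsupp.sum_add_index' (fun _ => rfl) fun _ _ _ => rfl⟩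
  | neg y _ hy =>
    obtain ⟨d, hd, rfl⟩ := hy
    exact ⟨-d, fun γ => ⟨neg_mem (hd γ).1, neg_mem (hd γ).2⟩,
      by rw [Finsupp.sum_neg_index fun _ => rfl, Finsupp.sum_neg]⟩

variable [AddCommGroup R] {𝒜 : GRingData Γ R}

theorem IsGraded.finsupp_eq_zero (hℳ : ℳ.IsGraded 𝒜) {d : GrIdx Γ →₀ M}
    (hd : ∀ γ, d γ ∈ ℳ.component γ.2.2) (hsum : (d.sum fun _ m => m) = 0) : d = 0 := by
  ext γ
  by_contra h
  exact h (hℳ.independent d.support d (fun γ _ => hd γ) hsum γ (Finsupp.mem_support_iff.2 h))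

theorem IsGrSub.mem_of_sum_mem (hℳ : ℳ.IsGraded 𝒜) {N : AddSubgroup M} (hN : ℳ.IsGrSub N)
    {ι : Type*} {deg : ι → GrIdx Γ} (hdeg : deg.Injective) {s : Finset ι} {c : ι → M}
    (hc : ∀ i ∈ s, c i ∈ ℳ.component (deg i).2.2) (hsum : ∑ i ∈ s, c i ∈ N) :
    ∀ i ∈ s, c i ∈ N := by
  classical
  obtain ⟨d, hd, hdsum⟩ := exists_finsupp_of_mem_closure (hN.2 _ hsum)
  set e : GrIdx Γ →₀ M := ∑ i ∈ s, Finsupp.single (deg i) (c i)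
  have he_apply : ∀ i ∈ s, e (deg i) = c i := by
    intro i hi
    simp [e, Finsupp.finsetSum_apply, Finsupp.single_apply, hdeg.eq_iff, hi]
  have he_mem : ∀ γ, e γ ∈ ℳ.component γ.2.2 := by
    intro γ
    rw [Finsupp.finsetSum_apply]
    refine sum_mem fun i hi => ?_
    rw [Finsupp.single_apply]
    split_ifs with h
    · subst h; exact hc i hi
    · exact zero_mem _
  have hed : e = d := by
    rw [← sub_eq_zero]
    refine hℳ.finsupp_eq_zero (fun γ => sub_mem (he_mem γ) (hd γ).1) ?_
    rw [Finsupp.sum_sub_index (fun _ _ _ => rfl), hdsum, sub_eq_zero]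
    rw [← Finsupp.sum_finsetSum_index (fun _ => rfl) (fun _ _ _ => rfl)]
    exact Finset.sum_congr rfl fun i _ => Finsupp.sum_single_index rfl
  intro i hi
  rw [← he_apply i hi, hed]
  exact (hd (deg i)).2

namespace IsGraded

def smulHom (hℳ : ℳ.IsGraded 𝒜) (m : M) : R →+ M :=
  AddMonoidHom.mk' (ℳ.smul m) (hℳ.smul_add m)

def colon (hℳ : ℳ.IsGraded 𝒜) (N : AddSubgroup M) (m : M) : AddSubgroup R :=
  N.comap (hℳ.smulHom m)

theorem zero_smul (hℳ : ℳ.IsGraded 𝒜) (a : R) : ℳ.smul 0 a = 0 :=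
  map_zero (AddMonoidHom.mk' (ℳ.smul · a) fun m n => hℳ.add_smul m n a)

theorem isHomogeneous_smul (hℳ : ℳ.IsGraded 𝒜) {e f g h : Γ} {σ : e ⟶ f} {τ : g ⟶ h}
    {m : M} {a : R} (hm : m ∈ ℳ.component σ) (ha : a ∈ 𝒜.component τ) : ℳ.IsHomogeneous (ℳ.smul m a) := by
  by_cases hhe : h = e
  · subst hhe
    exact ⟨g, f, τ ≫ σ, hℳ.smul_mem σ τ hm ha⟩
  · exact ⟨e, f, σ, by rw [hℳ.smul_eq_zero σ τ hhe hm ha]; exact zero_mem _⟩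

theorem smul_mem_range_smulHom (hℳ : ℳ.IsGraded 𝒜) {m x : M}
    (hx : x ∈ (hℳ.smulHom m).range) (a : R) : ℳ.smul x a ∈ (hℳ.smulHom m).range := by
  obtain ⟨b, rfl⟩ := hx
  exact ⟨𝒜.mul b a, hℳ.smul_mul m b a⟩

theorem smul_mem_sup (hℳ : ℳ.IsGraded 𝒜) {A B : AddSubgroup M}
    (hA : ∀ x ∈ A, ∀ a, ℳ.smul x a ∈ A) (hB : ∀ x ∈ B, ∀ a, ℳ.smul x a ∈ B) : ∀ x ∈ A ⊔ B, ∀ a, ℳ.smul x a ∈ A ⊔ B := by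
  intro x hx a
  obtain ⟨y, hy, z, hz, rfl⟩ := AddSubgroup.mem_sup.1 hx
  rw [hℳ.add_smul]
  exact add_mem (AddSubgroup.mem_sup_left (hA y hy a)) (AddSubgroup.mem_sup_right (hB z hz a))

theorem isGrSub_bot (hℳ : ℳ.IsGraded 𝒜) : ℳ.IsGrSub ⊥ := by
  refine ⟨fun x hx a => ?_, fun x hx => ?_⟩ <;> rw [AddSubgroup.mem_bot.1 hx]
  · rw [hℳ.zero_smul]; exact zero_mem _
  · exact zero_mem _

theorem isGrSub_sup (hℳ : ℳ.IsGraded 𝒜) {A B : AddSubgroup M} (hA : ℳ.IsGrSub A)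
    (hB : ℳ.IsGrSub B) : ℳ.IsGrSub (A ⊔ B) := by
  refine ⟨hℳ.smul_mem_sup hA.1 hB.1, fun x hx => ?_⟩
  obtain ⟨y, hy, z, hz, rfl⟩ := AddSubgroup.mem_sup.1 hx
  refine add_mem (AddSubgroup.closure_mono ?_ (hA.2 y hy))
    (AddSubgroup.closure_mono ?_ (hB.2 z hz))
  · exact fun w hw => ⟨AddSubgroup.mem_sup_left hw.1, hw.2⟩
  · exact fun w hw => ⟨AddSubgroup.mem_sup_right hw.1, hw.2⟩

theorem isGrSub_range_smulHom (hℳ : ℳ.IsGraded 𝒜) (h𝒜 : 𝒜.IsObjectUnital) {m : M}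
    (hm : ℳ.IsHomogeneous m) : ℳ.IsGrSub (hℳ.smulHom m).range := by
  obtain ⟨e, f, σ, hσ⟩ := hm
  refine ⟨fun x hx a => hℳ.smul_mem_range_smulHom hx a, ?_⟩
  rintro _ ⟨a, rfl⟩
  obtain ⟨s, cf, hcf, rfl⟩ := h𝒜.decompose a
  rw [map_sum]
  exact sum_mem fun γ hγ => AddSubgroup.subset_closure
    ⟨⟨cf γ, rfl⟩, hℳ.isHomogeneous_smul hσ (hcf γ hγ)⟩

def prefixSpan (hℳ : ℳ.IsGraded 𝒜) (v : ℕ → M) : ℕ → AddSubgroup M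
  | 0 => ⊥
  | i + 1 => hℳ.prefixSpan v i ⊔ (hℳ.smulHom (v i)).range

theorem monotone_prefixSpan (hℳ : ℳ.IsGraded 𝒜) (v : ℕ → M) : Monotone (hℳ.prefixSpan v) :=
  monotone_nat_of_le_succ fun _ => le_sup_left

theorem self_mem_range_smulHom (hℳ : ℳ.IsGraded 𝒜) {m : M} (hm : ℳ.IsHomogeneous m) :
    m ∈ (hℳ.smulHom m).range := by
  obtain ⟨e, f, σ, hσ⟩ := hm
  exact ⟨𝒜.one e, hℳ.smul_one σ hσ⟩

theorem mem_prefixSpan (hℳ : ℳ.IsGraded 𝒜) {v : ℕ → M} {i k : ℕ} (hik : i < k)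
    (hv : ℳ.IsHomogeneous (v i)) : v i ∈ hℳ.prefixSpan v k :=
  hℳ.monotone_prefixSpan v hik (AddSubgroup.mem_sup_right (hℳ.self_mem_range_smulHom hv))

theorem smul_mem_prefixSpan (hℳ : ℳ.IsGraded 𝒜) (v : ℕ → M) :
    ∀ i, ∀ x ∈ hℳ.prefixSpan v i, ∀ a, ℳ.smul x a ∈ hℳ.prefixSpan v i
  | 0 => fun x hx a => by rw [AddSubgroup.mem_bot.1 hx, hℳ.zero_smul]; exact zero_mem _
  | i + 1 => hℳ.smul_mem_sup (hℳ.smul_mem_prefixSpan v i) fun _ hx =>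
      hℳ.smul_mem_range_smulHom hx

theorem isGrSub_prefixSpan (hℳ : ℳ.IsGraded 𝒜) (h𝒜 : 𝒜.IsObjectUnital) {v : ℕ → M} :
    ∀ {k}, (∀ i < k, ℳ.IsHomogeneous (v i)) → ℳ.IsGrSub (hℳ.prefixSpan v k)
  | 0, _ => hℳ.isGrSub_bot
  | k + 1, hv => hℳ.isGrSub_sup (isGrSub_prefixSpan hℳ h𝒜 fun i hi => hv i (by omega))
      (hℳ.isGrSub_range_smulHom h𝒜 (hv k k.lt_succ_self))

theorem exists_homogeneous_generators (hℳ : ℳ.IsGraded 𝒜) (hfg : ℳ.FG) :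
    ∃ (k : ℕ) (v : ℕ → M), (∀ i < k, ℳ.IsHomogeneous (v i)) ∧ hℳ.prefixSpan v k = ⊤ := by
  classical
  obtain ⟨s, hs⟩ := hfg
  choose t cf hcf hsum using hℳ.decompose
  let l : List M := (s.biUnion fun x => (t x).image (cf x)).toList
  have hl : ∀ p ∈ l, ℳ.IsHomogeneous p := by
    intro p hp
    obtain ⟨x, -, γ, hγ, rfl⟩ : ∃ x ∈ s, ∃ γ ∈ t x, cf x γ = p := by simpa [l] using hp
    exact ⟨_, _, _, hcf x γ hγ⟩
  have hv : ∀ i < l.length, ℳ.IsHomogeneous (l.getD i 0) := fun i hi => by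
    rw [List.getD_eq_getElem _ _ hi]
    exact hl _ (List.getElem_mem hi)
  refine ⟨l.length, fun i => l.getD i 0, hv, top_le_iff.1 ?_⟩
  rw [← hs]
  refine sInf_le ⟨fun x hx => ?_, hℳ.smul_mem_prefixSpan _ _⟩
  rw [SetLike.mem_coe, hsum x]
  refine sum_mem fun γ hγ => ?_
  obtain ⟨i, hi, hget⟩ : ∃ (i : ℕ) (hi : i < l.length), l[i] = cf x γ :=
    List.mem_iff_getElem.1 (by
      simp only [l, Finset.mem_toList, Finset.mem_biUnion, Finset.mem_image]
      exact ⟨x, hx, γ, hγ, rfl⟩)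
  have := hℳ.mem_prefixSpan (v := fun i => l.getD i 0) hi (hv i hi)
  rwa [List.getD_eq_getElem _ _ hi, hget] at this

theorem inf_prefixSpan_le (hℳ : ℳ.IsGraded 𝒜) (v : ℕ → M) {N N' : AddSubgroup M}
    (hle : N ≤ N') : ∀ k, (∀ i < k, hℳ.colon (N' ⊔ hℳ.prefixSpan v i) (v i) ≤
      hℳ.colon (N ⊔ hℳ.prefixSpan v i) (v i)) → N' ⊓ hℳ.prefixSpan v k ≤ N
  | 0, _ => by simp [prefixSpan]
  | k + 1, hcolon => by
    rintro x ⟨hxN', hx⟩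
    obtain ⟨w, hw, _, ⟨a, rfl⟩, rfl⟩ := AddSubgroup.mem_sup.1 hx
    have ha : hℳ.smulHom (v k) a ∈ N ⊔ hℳ.prefixSpan v k := by
      refine hcolon k k.lt_succ_self (show hℳ.smulHom (v k) a ∈ N' ⊔ hℳ.prefixSpan v k from ?_)
      simpa using sub_mem (AddSubgroup.mem_sup_left hxN')
        (AddSubgroup.mem_sup_right hw : w ∈ N' ⊔ hℳ.prefixSpan v k)
    obtain ⟨n, hn, y, hy, hny⟩ :=
      AddSubgroup.mem_sup.1 (add_mem (AddSubgroup.mem_sup_right hw) ha)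
    have hyN' : y ∈ N' := by
      rw [eq_sub_of_add_eq' hny]
      exact sub_mem hxN' (hle hn)
    rw [← hny]
    exact add_mem hn
      (inf_prefixSpan_le hℳ v hle k (fun i hi => hcolon i (by omega)) ⟨hyN', hy⟩)

end IsGraded

theorem IsGraded.isGrSub_colon (hℳ : ℳ.IsGraded 𝒜) (h𝒜 : 𝒜.IsObjectUnital)
    {K : AddSubgroup M} (hK : ℳ.IsGrSub K) {m : M} (hm : ℳ.IsHomogeneous m) :
    𝒜.toMod.IsGrSub (hℳ.colon K m) := by
  obtain ⟨e, f, σ, hσ⟩ := hm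
  refine ⟨fun b hb r => ?_, fun a ha => ?_⟩
  · show ℳ.smul m (𝒜.mul b r) ∈ K
    rw [hℳ.smul_mul]
    exact hK.1 _ hb r
  obtain ⟨s, cf, hcf, rfl⟩ := h𝒜.decompose a
  suffices h : ∀ γ ∈ s, ℳ.smul m (cf γ) ∈ K from sum_mem fun γ hγ =>
    AddSubgroup.subset_closure ⟨h γ hγ, γ.1, γ.2.1, γ.2.2, hcf γ hγ⟩
  -- The products `m · cf γ` with `r(γ) = e` are the homogeneous components of `m · a`, of
  -- degrees `γ ≫ σ`; indexing them by `Σ g, g ⟶ e` makes `γ ↦ γ ≫ σ` injective.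
  let j : (Σ g : Γ, g ⟶ e) → GrIdx Γ := fun τ => ⟨τ.1, e, τ.2⟩
  have hj : j.Injective := by
    rintro ⟨g, τ⟩ ⟨g', τ'⟩ h
    obtain ⟨rfl, h⟩ := Sigma.mk.inj_iff.1 h
    exact Sigma.ext rfl (Sigma.mk.inj_iff.1 (eq_of_heq h)).2
  have hdeg : (fun τ : Σ g : Γ, g ⟶ e => (⟨τ.1, f, τ.2 ≫ σ⟩ : GrIdx Γ)).Injective := by
    rintro ⟨g, τ⟩ ⟨g', τ'⟩ h
    obtain ⟨rfl, h⟩ := Sigma.mk.inj_iff.1 h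
    exact Sigma.ext rfl
      (heq_of_eq ((cancel_mono σ).1 (eq_of_heq (Sigma.mk.inj_iff.1 (eq_of_heq h)).2)))
  have hsum : ∑ τ ∈ s.preimage j hj.injOn, ℳ.smul m (cf (j τ)) ∈ K := by
    rw [Finset.sum_preimage _ _ _ (fun γ => ℳ.smul m (cf γ))]
    · simpa [colon, smulHom, map_sum] using ha
    · rintro ⟨g, x, τ⟩ hγ hx
      have hxe : x ≠ e := by rintro rfl; exact hx ⟨⟨g, τ⟩, rfl⟩
      exact hℳ.smul_eq_zero σ τ hxe hσ (hcf _ hγ)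
  have hcomp := hK.mem_of_sum_mem hℳ hdeg
    (fun τ hτ => hℳ.smul_mem σ τ.2 hσ (hcf _ (Finset.mem_preimage.1 hτ))) hsum
  rintro ⟨g, x, τ⟩ hγ
  by_cases hxe : x = e
  · subst hxe
    exact hcomp ⟨g, τ⟩ (Finset.mem_preimage.2 hγ)
  · rw [hℳ.smul_eq_zero σ τ hxe hσ (hcf _ hγ)]
    exact zero_mem _

theorem exists_strictMono_pi_grSubmodule (h𝒜 : 𝒜.IsObjectUnital) (hℳ : ℳ.IsGraded 𝒜)
    (hfg : ℳ.FG) :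
    ∃ (k : ℕ) (J : ℳ.GrSubmodule → Fin k → 𝒜.toMod.GrSubmodule), StrictMono J := by
  obtain ⟨k, v, hv, hspan⟩ := hℳ.exists_homogeneous_generators hfg
  refine ⟨k, fun N i => ⟨hℳ.colon (N.1 ⊔ hℳ.prefixSpan v i) (v i),
    hℳ.isGrSub_colon h𝒜
      (hℳ.isGrSub_sup N.2 (hℳ.isGrSub_prefixSpan h𝒜 fun j hj => hv j (hj.trans i.2)))
      (hv i i.2)⟩, fun N N' hlt => ?_⟩
  refine lt_of_le_not_ge (fun i => AddSubgroup.comap_mono (sup_le_sup_right hlt.le _))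
    fun hge => hlt.not_ge ?_
  have := hℳ.inf_prefixSpan_le v hlt.le k fun i hi => hge ⟨i, hi⟩
  rwa [hspan, inf_top_eq] at this

end GModData

/-- Let `R` be a `Γ`-graded ring such that the right `R`-module
`R` is gr-noetherian (resp. gr-artinian), and let `M` be a `Γ`-graded right
`R`-module. If `M` is finitely generated, then `M` is gr-noetherian
(resp. gr-artinian). -/
theorem grNoetherian_of_fg_and_grArtinian_of_fg
    {Γ : Type u} [Groupoid.{u} Γ] {R : Type u} [AddCommGroup R] {M : Type u}
    [AddCommGroup M] (𝒜 : GRingData Γ R) (h𝒜 : 𝒜.IsObjectUnital)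
    (ℳ : GModData Γ R M) (hℳ : ℳ.IsGraded 𝒜) (hfg : ℳ.FG) :
    (𝒜.toMod.GrNoetherian → ℳ.GrNoetherian) ∧
    (𝒜.toMod.GrArtinian → ℳ.GrArtinian) := by
  obtain ⟨k, J, hJ⟩ := GModData.exists_strictMono_pi_grSubmodule h𝒜 hℳ hfg
  refine ⟨fun hR => ?_, fun hR => ?_⟩
  · rw [GModData.grNoetherian_iff_wellFoundedGT] at hR ⊢
    -- Mathlib registers only `WellFoundedLT` on pi types; `>` is `<` on the order dual.
    have : WellFoundedGT (Fin k → 𝒜.toMod.GrSubmodule) :=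
      inferInstanceAs (WellFoundedLT (Fin k → (𝒜.toMod.GrSubmodule)ᵒᵈ))
    exact hJ.wellFoundedGT
  · rw [GModData.grArtinian_iff_wellFoundedLT] at hR ⊢
    exact hJ.wellFoundedLT
end

section
/- Let R be a Γ-graded ring and M a Γ-graded right R-module. Then M is strongly Γ0-artinian (resp. strongly Γ0-noetherian) if and only if M is Γ0-artinian (resp. Γ0-noetherian) and there exist a subset Δ₀ ⊆ Γ₀ and n₀ ∈ ℕ such that Γ₀ \ Δ₀ is finite and, for every e ∈ Δ₀, M(e) has finite gr-length not greater than n₀. -/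
/-!
A graded submodule `N` of `M` is determined by its traces `N ∩ M(e)`, and for graded `N ≤ P` the
set `Γ'₀(P/N)` consists of the `e` at which the traces of `N` and `P` differ. Along a tight chain
these step supports decrease.

If almost all `M(e)` have gr-length at most `n₀`, the traces in such an `M(e)` jump at most `n₀`
times, so from step `n₀` on every step support lies in the finite exceptional set. Nested nonempty
subsets of a finite set share a point `e`, and the traces in `M(e)` would then form an infinite
strict chain; hence some step is trivial, and tightness makes all later steps trivial.

Conversely, if the lengths are unbounded on every cofinite set, choose distinct `e_k` such that
`M(e_k)` contains a strict chain of length `k`, and add these chains up, staggered so that the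
`i`-th step jumps exactly at the `e_k` with `k > i`: a tight chain that never stabilizes.

Lengths are compared in the modular lattice of graded submodules, where the number of composition
factors covered by an element strictly increases along every strict chain.
-/

open CategoryTheory

universe u

variable {Γ : Type u} [Groupoid.{u} Γ]

theorem Set.nonempty_iInter_of_antitone {α : Type*} {S : ℕ → Set α} (hS : Antitone S)
    (hne : ∀ i, (S i).Nonempty) {n : ℕ} (hfin : (S n).Finite) : (⋂ i, S i).Nonempty := by
  choose x hx using fun i => hne (i + n)
  have : Finite (S n) := hfin.to_subtype
  obtain ⟨y, hy⟩ := Finite.exists_infinite_fiber fun i =>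
    (⟨x i, hS (Nat.le_add_left n i) (hx i)⟩ : S n)
  refine ⟨y, Set.mem_iInter.2 fun j => ?_⟩
  obtain ⟨i, hi, hji⟩ := (Set.infinite_coe_iff.mp hy).exists_gt j
  exact hS (by omega : j ≤ i + n) (congrArg Subtype.val hi ▸ hx i)

theorem Set.exists_injective_forall_mem {α : Type*} {A : ℕ → Set α} (hA : ∀ n, (A n).Infinite) :
    ∃ E : ℕ → α, Function.Injective E ∧ ∀ n, E n ∈ A n := by
  classical
  choose next hnext_mem hnext_notMem using fun n => (hA n).exists_notMem_finset
  let used : ℕ → Finset α := fun n => Nat.rec ∅ (fun k s => insert (next k s) s) n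
  have hused : ∀ j n, j < n → next j (used j) ∈ used n := by
    intro j n hjn
    induction n with
    | zero => omega
    | succ n ih =>
      rcases Nat.lt_succ_iff_lt_or_eq.mp hjn with h | rfl
      · exact Finset.mem_insert_of_mem (ih h)
      · exact Finset.mem_insert_self _ _
  refine ⟨fun n => next n (used n), .of_lt_imp_ne fun j n hjn h => ?_, fun n => hnext_mem _ _⟩
  exact hnext_notMem n (used n) (h ▸ hused j n hjn)

theorem AddSubgroup.addSubgroupOf_le_addSubgroupOf_iff {G : Type*} [AddGroup G]
    {A B P : AddSubgroup G} : A.addSubgroupOf P ≤ B.addSubgroupOf P ↔ A ⊓ P ≤ B :=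
  ⟨fun h x hx => h (show (⟨x, hx.2⟩ : P) ∈ A.addSubgroupOf P from hx.1), fun h x hx => h ⟨hx, x.2⟩⟩

section Lattice

variable {α : Type*} [Lattice α]

/-- The number of factors `c i ⋖ c (i + 1)`, `i < m`, that `x` covers. In a modular lattice it
strictly increases along chains inside `[c 0, c m]`, which bounds their length by `m`. -/
noncomputable def factorCount (c : ℕ → α) (m : ℕ) (x : α) : ℕ := by
  classical exact ((Finset.range m).filter fun i => x ⊓ c (i + 1) ⊔ c i = c (i + 1)).card

theorem factorCount_le (c : ℕ → α) (m : ℕ) (x : α) : factorCount c m x ≤ m := by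
  classical exact (Finset.card_filter_le _ _).trans (Finset.card_range m).le

variable [IsModularLattice α]

instance Sublattice.instIsModularLattice (S : Sublattice α) : IsModularLattice S :=
  ⟨fun {_} y {z} h => IsModularLattice.sup_inf_le_assoc_of_le (y : α) (z := (z : α))
    (Subtype.coe_le_coe.mpr h)⟩

theorem le_of_forall_inf_sup_le {c : ℕ → α} {m : ℕ} {x y : α} (hxy : x ≤ y)
    (h0 : y ⊓ c 0 ≤ x) (hm : y ≤ c m)
    (h : ∀ i < m, y ⊓ c (i + 1) ⊔ c i ≤ x ⊓ c (i + 1) ⊔ c i) : y ≤ x := by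
  suffices ∀ i ≤ m, y ⊓ c i ≤ x by simpa [inf_eq_left.mpr hm] using this m le_rfl
  intro i hi
  induction i with
  | zero => exact h0
  | succ i ih =>
    calc y ⊓ c (i + 1) ≤ (x ⊓ c (i + 1) ⊔ c i) ⊓ (y ⊓ c (i + 1)) :=
          le_inf (le_sup_left.trans (h i hi)) le_rfl
      _ = x ⊓ c (i + 1) ⊔ c i ⊓ (y ⊓ c (i + 1)) :=
          sup_inf_assoc_of_le _ (inf_le_inf_right _ hxy)
      _ ≤ x := sup_le inf_le_left
          ((le_inf (inf_le_right.trans inf_le_left) inf_le_left).trans (ih (by omega)))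

theorem factorCount_lt_factorCount {c : ℕ → α} {m : ℕ} (hc : ∀ i < m, c i ⋖ c (i + 1))
    {x y : α} (h0 : c 0 ≤ x) (hxy : x < y) (hm : y ≤ c m) :
    factorCount c m x < factorCount c m y := by
  classical
  have hval : ∀ z i, i < m → z ⊓ c (i + 1) ⊔ c i = c i ∨ z ⊓ c (i + 1) ⊔ c i = c (i + 1) :=
    fun z i hi => (hc i hi).eq_or_eq le_sup_right (sup_le inf_le_right (hc i hi).le)
  have hmono : ∀ i, x ⊓ c (i + 1) ⊔ c i ≤ y ⊓ c (i + 1) ⊔ c i :=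
    fun i => sup_le_sup_right (inf_le_inf_right _ hxy.le) _
  apply Finset.card_lt_card
  rw [Finset.ssubset_iff_of_subset]
  · obtain ⟨i, hi, hyx⟩ : ∃ i < m, ¬ y ⊓ c (i + 1) ⊔ c i ≤ x ⊓ c (i + 1) ⊔ c i := by
      by_contra! h
      exact hxy.not_ge (le_of_forall_inf_sup_le hxy.le (inf_le_right.trans h0) hm h)
    have hx : x ⊓ c (i + 1) ⊔ c i = c i := (hval x i hi).resolve_right fun h =>
      hyx (by rw [h]; exact sup_le inf_le_right (hc i hi).le)
    have hy : y ⊓ c (i + 1) ⊔ c i = c (i + 1) := (hval y i hi).resolve_left fun h =>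
      hyx (by rw [h, hx])
    refine ⟨i, by simp [hi, hy], fun hmem => (hc i hi).lt.ne ?_⟩
    rw [← hx, (Finset.mem_filter.mp hmem).2]
  · intro i hmem
    obtain ⟨hi, hx⟩ := Finset.mem_filter.mp hmem
    refine Finset.mem_filter.mpr ⟨hi, le_antisymm (sup_le inf_le_right (hc i ?_).le) ?_⟩
    · simpa using hi
    · exact hx.symm.le.trans (hmono i)

theorem length_le_of_covBy {c d : ℕ → α} {m k : ℕ} (hc : ∀ i < m, c i ⋖ c (i + 1))
    (hd : ∀ j < k, d j < d (j + 1)) (h0 : c 0 ≤ d 0) (hk : d k ≤ c m) : k ≤ m := by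
  have hdmono : MonotoneOn d (Set.Iic k) :=
    (strictMonoOn_Iic_of_lt_succ fun j hj => by simpa using hd j hj).monotoneOn
  have hcount : ∀ j ≤ k, j ≤ factorCount c m (d j) := by
    intro j hj
    induction j with
    | zero => exact Nat.zero_le _
    | succ j ih =>
      refine (ih (by omega)).trans_lt (factorCount_lt_factorCount hc ?_ (hd j (by omega)) ?_)
      · exact h0.trans (hdmono (by simp) (by simp; omega) (Nat.zero_le j))
      · exact (hdmono (by simp; omega) (by simp) hj).trans hk
  exact (hcount k le_rfl).trans (factorCount_le c m (d k))

end Lattice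

theorem exists_covBy_seq_of_forall_length_le {α : Type*} [PartialOrder α] {L : ℕ}
    (hL : ∀ (d : ℕ → α) (k : ℕ), (∀ j < k, d j < d (j + 1)) → k ≤ L) {x y : α} (hxy : x ≤ y) :
    ∃ c : ℕ → α, c 0 = x ∧ ∃ m ≤ L, c m = y ∧ ∀ i < m, c i ⋖ c (i + 1) := by
  have : WellFoundedLT α := ⟨wellFounded_iff_isEmpty_descending_chain.mpr ⟨fun ⟨f, hf⟩ => by
    have := hL (fun j => f (L + 1 - j)) (L + 1) fun j hj => by
      simpa [show L + 1 - j = L + 1 - (j + 1) + 1 by omega] using hf (L + 1 - (j + 1))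
    omega⟩⟩
  have : WellFoundedGT α := ⟨wellFounded_iff_isEmpty_descending_chain.mpr ⟨fun ⟨f, hf⟩ => by
    have := hL f (L + 1) fun j _ => hf j
    omega⟩⟩
  obtain ⟨c, hc0, m, hcm, hcov⟩ := exists_covBy_seq_of_wellFoundedLT_wellFoundedGT_of_le hxy
  exact ⟨c, hc0, m, hL c m fun i hi => (hcov i hi).lt, hcm, hcov⟩

namespace GModData

variable {R M : Type u} [AddCommGroup M] {ℳ : GModData Γ R M} {N P : AddSubgroup M}

/-- `Γ'₀(P/N)`, extended to arbitrary `N` and `P`; it equals `Γ'₀(P/N)` when `N ≤ P` are graded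
(`partSupport_subquot`). -/
def diffSupport (ℳ : GModData Γ R M) (N P : AddSubgroup M) : Set Γ :=
  {e | N ⊓ ℳ.part e ≠ P ⊓ ℳ.part e}

theorem diffSupport_comm : ℳ.diffSupport N P = ℳ.diffSupport P N :=
  Set.ext fun _ => ne_comm

/-- `Γ'₀(M_i/M_{i+1})` or `Γ'₀(M_{i+1}/M_i)`, whichever way the chain `c` runs. -/
def stepSupport (ℳ : GModData Γ R M) (c : ℕ → AddSubgroup M) (i : ℕ) : Set Γ :=
  ℳ.diffSupport (c i) (c (i + 1))

def BoundedPartLength (ℳ : GModData Γ R M) : Prop :=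
  ∃ (Δ : Set Γ) (n₀ : ℕ), (Δᶜ : Set Γ).Finite ∧
    ∀ e ∈ Δ, ∃ m ≤ n₀, ∃ cc : ℕ → AddSubgroup ↥(ℳ.part e),
      (ℳ.restrict (ℳ.part e)).IsGrCompSeries m cc

theorem ne_of_mem_stepSupport {c : ℕ → AddSubgroup M} {i : ℕ} {e : Γ}
    (he : e ∈ ℳ.stepSupport c i) : c i ≠ c (i + 1) :=
  fun h => he (by rw [h])

theorem addSubgroupOf_part_lt (hNP : N ≤ P) {e : Γ} (he : e ∈ ℳ.diffSupport N P) :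
    N.addSubgroupOf (ℳ.part e) < P.addSubgroupOf (ℳ.part e) :=
  lt_of_le_of_ne (AddSubgroup.addSubgroupOf_mono _ hNP) fun h =>
    he (AddSubgroup.addSubgroupOf_inj.mp h)

theorem component_le_part {f e : Γ} (σ : f ⟶ e) : ℳ.component σ ≤ ℳ.part e :=
  le_iSup₂_of_le f σ le_rfl

theorem restrict_smul (hP : ∀ m ∈ P, ∀ a : R, ℳ.smul m a ∈ P) (m : P) (a : R) :
    (ℳ.restrict P).smul m a = ⟨ℳ.smul m a, hP m m.2 a⟩ :=
  dif_pos _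

theorem isGrSub_map_subtype (hP : ℳ.IsGrSub P) {A : AddSubgroup P}
    (hA : (ℳ.restrict P).IsGrSub A) : ℳ.IsGrSub (A.map P.subtype) := by
  refine ⟨?_, fun x hx => ?_⟩
  · rintro _ ⟨y, hy, rfl⟩ a
    exact ⟨_, hA.1 y hy a, by simp [restrict_smul hP.1]⟩
  · refine (?_ : A.map P.subtype ≤ _) hx
    calc A.map P.subtype
        ≤ (AddSubgroup.closure {y | y ∈ A ∧ (ℳ.restrict P).IsHomogeneous y}).map P.subtype :=
          AddSubgroup.map_mono hA.2
      _ = AddSubgroup.closure (P.subtype '' {y | y ∈ A ∧ (ℳ.restrict P).IsHomogeneous y}) :=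
          AddMonoidHom.map_closure _ _
      _ ≤ _ := AddSubgroup.closure_mono <| by
          rintro _ ⟨y, ⟨hyA, e, f, σ, hyσ⟩, rfl⟩
          exact ⟨⟨y, hyA, rfl⟩, e, f, σ, hyσ⟩

variable [AddCommGroup R] {𝒜 : GRingData Γ R}

/-! ### Homogeneous components -/

def smulHom (hℳ : ℳ.IsGraded 𝒜) (a : R) : M →+ M :=
  AddMonoidHom.mk' (ℳ.smul · a) (hℳ.add_smul · · a)

@[simp]
theorem smulHom_apply (hℳ : ℳ.IsGraded 𝒜) (a : R) (m : M) : smulHom hℳ a m = ℳ.smul m a := rfl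

namespace IsGraded

open scoped Classical in
theorem isInternal (hℳ : ℳ.IsGraded 𝒜) :
    DirectSum.IsInternal fun γ : GrIdx Γ => ℳ.component γ.2.2 := by
  classical
  refine ⟨(injective_iff_map_eq_zero _).mpr fun x hx => ?_, fun x => ?_⟩
  · rw [DirectSum.coeAddMonoidHom_eq_dfinsuppSum] at hx
    ext γ
    by_cases hγ : γ ∈ x.support
    · simpa using hℳ.independent x.support (fun γ => x γ) (fun γ _ => (x γ).2) hx γ hγ
    · simp [DFinsupp.notMem_support_iff.mp hγ]
  · obtain ⟨s, cf, hcf, rfl⟩ := hℳ.decompose x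
    refine ⟨∑ γ ∈ s, DirectSum.of (fun γ : GrIdx Γ => ℳ.component γ.2.2) γ
      (if h : γ ∈ s then ⟨cf γ, hcf γ h⟩ else 0), ?_⟩
    rw [map_sum]
    refine Finset.sum_congr rfl fun γ hγ => ?_
    simp [hγ]

open scoped Classical in
noncomputable def proj (hℳ : ℳ.IsGraded 𝒜) (γ : GrIdx Γ) : M →+ M :=
  letI := hℳ.isInternal.chooseDecomposition
  (ℳ.component γ.2.2).subtype.comp ((DFinsupp.evalAddMonoidHom γ).comp
    (DirectSum.decomposeAddEquiv fun γ : GrIdx Γ => ℳ.component γ.2.2).toAddMonoidHom)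

theorem proj_mem (hℳ : ℳ.IsGraded 𝒜) (γ : GrIdx Γ) (x : M) :
    hℳ.proj γ x ∈ ℳ.component γ.2.2 := by
  classical
  let := hℳ.isInternal.chooseDecomposition
  exact (DirectSum.decompose (fun γ : GrIdx Γ => ℳ.component γ.2.2) x γ).2

theorem proj_of_mem (hℳ : ℳ.IsGraded 𝒜) {γ : GrIdx Γ} {x : M} (hx : x ∈ ℳ.component γ.2.2) :
    hℳ.proj γ x = x := by
  classical
  let := hℳ.isInternal.chooseDecomposition
  exact DirectSum.decompose_of_mem_same _ hx

theorem proj_of_mem_of_ne (hℳ : ℳ.IsGraded 𝒜) {γ δ : GrIdx Γ} {x : M}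
    (hx : x ∈ ℳ.component δ.2.2) (h : δ ≠ γ) : hℳ.proj γ x = 0 := by
  classical
  let := hℳ.isInternal.chooseDecomposition
  exact DirectSum.decompose_of_mem_ne _ hx h

theorem exists_sum_proj (hℳ : ℳ.IsGraded 𝒜) (x : M) :
    ∃ s : Finset (GrIdx Γ), ∑ γ ∈ s, hℳ.proj γ x = x := by
  classical
  let := hℳ.isInternal.chooseDecomposition
  exact ⟨_, DirectSum.sum_support_decompose _ x⟩

theorem proj_sum (hℳ : ℳ.IsGraded 𝒜) {s : Finset (GrIdx Γ)} {z : GrIdx Γ → M}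
    (hz : ∀ δ ∈ s, z δ ∈ ℳ.component δ.2.2) {γ : GrIdx Γ} (hγ : γ ∈ s) :
    hℳ.proj γ (∑ δ ∈ s, z δ) = z γ := by
  rw [map_sum, Finset.sum_eq_single γ (fun δ hδ hne => hℳ.proj_of_mem_of_ne (hz δ hδ) hne)
    (absurd hγ), hℳ.proj_of_mem (hz γ hγ)]

theorem addMonoidHom_ext (hℳ : ℳ.IsGraded 𝒜) {X : Type*} [AddCommMonoid X] {f g : M →+ X}
    (h : ∀ γ : GrIdx Γ, ∀ x ∈ ℳ.component γ.2.2, f x = g x) : f = g := by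
  ext x
  obtain ⟨s, hs⟩ := hℳ.exists_sum_proj x
  rw [← hs, map_sum, map_sum]
  exact Finset.sum_congr rfl fun γ _ => h γ _ (hℳ.proj_mem γ x)

end IsGraded

theorem isGrSub_iff (hℳ : ℳ.IsGraded 𝒜) : ℳ.IsGrSub N ↔
    (∀ m ∈ N, ∀ a : R, ℳ.smul m a ∈ N) ∧ ∀ γ : GrIdx Γ, ∀ x ∈ N, hℳ.proj γ x ∈ N := by
  refine and_congr_right fun _ => ⟨fun h γ x hx => ?_, fun h x hx => ?_⟩
  · have : AddSubgroup.closure {x | x ∈ N ∧ ℳ.IsHomogeneous x} ≤ N.comap (hℳ.proj γ) := by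
      rw [AddSubgroup.closure_le]
      rintro y ⟨hyN, e, f, σ, hyσ⟩
      by_cases hγ : (⟨e, f, σ⟩ : GrIdx Γ) = γ
      · subst hγ
        simpa [hℳ.proj_of_mem (γ := ⟨e, f, σ⟩) hyσ] using hyN
      · simp [hℳ.proj_of_mem_of_ne (δ := ⟨e, f, σ⟩) hyσ hγ]
    exact this (h x hx)
  · obtain ⟨s, hs⟩ := hℳ.exists_sum_proj x
    rw [← hs]
    exact AddSubgroup.sum_mem _ fun γ _ =>
      AddSubgroup.subset_closure ⟨h γ x hx, _, _, _, hℳ.proj_mem γ x⟩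

theorem IsGrSub.proj_mem (hℳ : ℳ.IsGraded 𝒜) (hN : ℳ.IsGrSub N) (γ : GrIdx Γ) {x : M}
    (hx : x ∈ N) : hℳ.proj γ x ∈ N :=
  ((isGrSub_iff hℳ).1 hN).2 γ x hx

theorem isGrSub_bot (hℳ : ℳ.IsGraded 𝒜) : ℳ.IsGrSub (⊥ : AddSubgroup M) :=
  (isGrSub_iff hℳ).2 ⟨fun m hm a => by
      rw [AddSubgroup.mem_bot, AddSubgroup.mem_bot.mp hm]
      exact (smulHom hℳ a).map_zero,
    fun γ x hx => by simp [AddSubgroup.mem_bot.mp hx]⟩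

theorem isGrSub_top (hℳ : ℳ.IsGraded 𝒜) : ℳ.IsGrSub (⊤ : AddSubgroup M) :=
  (isGrSub_iff hℳ).2 ⟨fun _ _ _ => trivial, fun _ _ _ => trivial⟩

theorem isGrSub_inf (hℳ : ℳ.IsGraded 𝒜) (hN : ℳ.IsGrSub N) (hP : ℳ.IsGrSub P) :
    ℳ.IsGrSub (N ⊓ P) :=
  (isGrSub_iff hℳ).2 ⟨fun m hm a => ⟨hN.1 m hm.1 a, hP.1 m hm.2 a⟩,
    fun γ _ hx => ⟨hN.proj_mem hℳ γ hx.1, hP.proj_mem hℳ γ hx.2⟩⟩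

theorem isGrSub_iSup (hℳ : ℳ.IsGraded 𝒜) {ι : Sort*} {N : ι → AddSubgroup M}
    (hN : ∀ i, ℳ.IsGrSub (N i)) : ℳ.IsGrSub (⨆ i, N i) := by
  have key : ∀ f : M →+ M, (∀ i, ∀ x ∈ N i, f x ∈ N i) → ⨆ i, N i ≤ (⨆ i, N i).comap f :=
    fun f hf => iSup_le fun i x hx => AddSubgroup.mem_iSup_of_mem i (hf i x hx)
  exact (isGrSub_iff hℳ).2 ⟨fun m hm a => key (smulHom hℳ a) (fun i x hx => (hN i).1 x hx a) hm,
    fun γ x hx => key (hℳ.proj γ) (fun i _ hx => (hN i).proj_mem hℳ γ hx) hx⟩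

theorem isGrSub_sup (hℳ : ℳ.IsGraded 𝒜) (hN : ℳ.IsGrSub N) (hP : ℳ.IsGrSub P) :
    ℳ.IsGrSub (N ⊔ P) := by
  rw [sup_eq_iSup]
  exact isGrSub_iSup hℳ fun b => by cases b <;> assumption

def grSublattice (hℳ : ℳ.IsGraded 𝒜) : Sublattice (AddSubgroup M) where
  carrier := {N | ℳ.IsGrSub N}
  supClosed' _ hN _ hP := isGrSub_sup hℳ hN hP
  infClosed' _ hN _ hP := isGrSub_inf hℳ hN hP

theorem IsGraded.proj_mem_part (hℳ : ℳ.IsGraded 𝒜) (γ : GrIdx Γ) (x : M) :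
    hℳ.proj γ x ∈ ℳ.part γ.2.1 :=
  ℳ.component_le_part _ (hℳ.proj_mem γ x)

theorem IsGraded.proj_eq_zero_of_mem_part (hℳ : ℳ.IsGraded 𝒜) {e : Γ} {x : M}
    (hx : x ∈ ℳ.part e) {γ : GrIdx Γ} (hγ : γ.2.1 ≠ e) : hℳ.proj γ x = 0 := by
  have : ℳ.part e ≤ (hℳ.proj γ).ker := iSup₂_le fun f σ y hy =>
    hℳ.proj_of_mem_of_ne (δ := ⟨f, e, σ⟩) hy (by rintro rfl; exact hγ rfl)
  exact this hx

theorem part_isGrSub (h𝒜 : 𝒜.IsObjectUnital) (hℳ : ℳ.IsGraded 𝒜) (e : Γ) :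
    ℳ.IsGrSub (ℳ.part e) := by
  refine (isGrSub_iff hℳ).2 ⟨fun m hm a => ?_, fun γ x hx => ?_⟩
  · refine (iSup₂_le fun f σ y hy => ?_ : ℳ.part e ≤ (ℳ.part e).comap (smulHom hℳ a)) hm
    obtain ⟨s, cf, hcf, rfl⟩ := h𝒜.decompose a
    rw [AddSubgroup.mem_comap, smulHom_apply, show ℳ.smul y (∑ γ ∈ s, cf γ) =
      ∑ γ ∈ s, ℳ.smul y (cf γ) from map_sum (AddMonoidHom.mk' (ℳ.smul y) (hℳ.smul_add y)) cf s]
    refine AddSubgroup.sum_mem _ fun ⟨g, h, τ⟩ hτ => ?_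
    by_cases hh : h = f
    · subst hh
      exact ℳ.component_le_part _ (hℳ.smul_mem σ τ hy (hcf _ hτ))
    · simp [hℳ.smul_eq_zero σ τ hh hy (hcf _ hτ)]
  · by_cases hγ : γ.2.1 = e
    · exact hγ ▸ hℳ.proj_mem_part γ x
    · simp [hℳ.proj_eq_zero_of_mem_part hx hγ]

theorem part_inf_part_eq_bot (hℳ : ℳ.IsGraded 𝒜) {e e' : Γ} (h : e ≠ e') :
    ℳ.part e ⊓ ℳ.part e' = ⊥ := by
  refine eq_bot_iff.2 fun x hx => ?_
  obtain ⟨s, hs⟩ := hℳ.exists_sum_proj x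
  rw [← hs, AddSubgroup.mem_bot]
  refine Finset.sum_eq_zero fun γ _ => ?_
  by_cases hγ : γ.2.1 = e
  · exact hℳ.proj_eq_zero_of_mem_part hx.2 (hγ ▸ h)
  · exact hℳ.proj_eq_zero_of_mem_part hx.1 hγ

theorem le_of_forall_inf_part_le (hℳ : ℳ.IsGraded 𝒜) (hN : ℳ.IsGrSub N)
    (h : ∀ e, N ⊓ ℳ.part e ≤ P) : N ≤ P := by
  intro x hx
  obtain ⟨s, hs⟩ := hℳ.exists_sum_proj x
  rw [← hs]
  exact AddSubgroup.sum_mem _ fun γ _ => h _ ⟨hN.proj_mem hℳ γ hx, hℳ.proj_mem_part γ x⟩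

theorem inf_part_le_iff (hℳ : ℳ.IsGraded 𝒜) (hP : ℳ.IsGrSub P) {e : Γ} :
    P ⊓ ℳ.part e ≤ N ↔ ∀ (f : Γ) (σ : f ⟶ e), ℳ.component σ ⊓ P ≤ N := by
  refine ⟨fun h f σ x hx => h ⟨hx.2, ℳ.component_le_part σ hx.1⟩, fun h x hx => ?_⟩
  obtain ⟨s, hs⟩ := hℳ.exists_sum_proj x
  rw [← hs]
  refine AddSubgroup.sum_mem _ fun ⟨f, g, σ⟩ _ => ?_
  by_cases hg : g = e
  · subst hg
    exact h f σ ⟨hℳ.proj_mem ⟨f, g, σ⟩ x, hP.proj_mem hℳ _ hx.1⟩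
  · simp [hℳ.proj_eq_zero_of_mem_part hx.2 (γ := ⟨f, g, σ⟩) hg]

theorem exists_sum_proj_restrict (hℳ : ℳ.IsGraded 𝒜) (hP : ℳ.IsGrSub P) (x : P) :
    ∃ s : Finset (GrIdx Γ), ∑ γ ∈ s, (⟨hℳ.proj γ x, hP.proj_mem hℳ γ x.2⟩ : P) = x := by
  obtain ⟨s, hs⟩ := hℳ.exists_sum_proj (x : M)
  exact ⟨s, Subtype.ext (by simpa using hs)⟩

theorem restrict_isGraded (hℳ : ℳ.IsGraded 𝒜) (hP : ℳ.IsGrSub P) :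
    (ℳ.restrict P).IsGraded 𝒜 where
  add_smul m n a := Subtype.ext <| by simp only [restrict_smul hP.1, AddSubgroup.coe_add,
    hℳ.add_smul]
  smul_add m a b := Subtype.ext <| by simp only [restrict_smul hP.1, AddSubgroup.coe_add,
    hℳ.smul_add]
  smul_mul m a b := Subtype.ext <| by simp only [restrict_smul hP.1, hℳ.smul_mul]
  decompose x := by
    obtain ⟨s, hs⟩ := exists_sum_proj_restrict hℳ hP x
    exact ⟨s, _, fun γ _ => hℳ.proj_mem γ x, hs.symm⟩
  independent s cf hcf hsum γ hγ := Subtype.ext <| hℳ.independent s (fun γ => cf γ) hcf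
    (by simpa using congrArg Subtype.val hsum) γ hγ
  smul_mem σ τ _ _ hm ha := by
    rw [restrict_smul hP.1]
    exact hℳ.smul_mem σ τ hm ha
  smul_eq_zero σ τ _ _ hh hm ha := Subtype.ext <| by
    rw [restrict_smul hP.1]
    exact hℳ.smul_eq_zero σ τ hh hm ha
  smul_one σ _ hm := Subtype.ext <| by
    rw [restrict_smul hP.1]
    exact hℳ.smul_one σ hm

theorem isGrSub_addSubgroupOf (hℳ : ℳ.IsGraded 𝒜) (hP : ℳ.IsGrSub P) (hN : ℳ.IsGrSub N) :
    (ℳ.restrict P).IsGrSub (N.addSubgroupOf P) := by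
  refine ⟨fun m hm a => ?_, fun x hx => ?_⟩
  · rw [AddSubgroup.mem_addSubgroupOf, restrict_smul hP.1]
    exact hN.1 _ hm a
  · obtain ⟨s, hs⟩ := exists_sum_proj_restrict hℳ hP x
    rw [← hs]
    exact AddSubgroup.sum_mem _ fun γ _ =>
      AddSubgroup.subset_closure ⟨hN.proj_mem hℳ γ hx, _, _, γ.2.2, hℳ.proj_mem γ x⟩

theorem quot_smul_mk (hℳ : ℳ.IsGraded 𝒜) (hN : ∀ m ∈ N, ∀ a : R, ℳ.smul m a ∈ N) (y : M)
    (a : R) : (ℳ.quot N).smul (y : M ⧸ N) a = (ℳ.smul y a : M ⧸ N) := by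
  show ((ℳ.smul (Quotient.out (y : M ⧸ N)) a : M) : M ⧸ N) = _
  rw [QuotientAddGroup.eq_iff_sub_mem, ← smulHom_apply hℳ, ← smulHom_apply hℳ, ← map_sub]
  exact hN _ (QuotientAddGroup.eq_iff_sub_mem.mp (Quotient.out_eq _)) a

theorem quot_isGraded (hℳ : ℳ.IsGraded 𝒜) (hN : ℳ.IsGrSub N) : (ℳ.quot N).IsGraded 𝒜 where
  add_smul m n a := by
    induction m using QuotientAddGroup.induction_on with | _ u => ?_
    induction n using QuotientAddGroup.induction_on with | _ v => ?_
    simp only [← QuotientAddGroup.mk_add, quot_smul_mk hℳ hN.1, hℳ.add_smul]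
  smul_add m a b := by
    induction m using QuotientAddGroup.induction_on with | _ u => ?_
    simp only [quot_smul_mk hℳ hN.1, hℳ.smul_add, QuotientAddGroup.mk_add]
  smul_mul m a b := by
    induction m using QuotientAddGroup.induction_on with | _ u => ?_
    simp only [quot_smul_mk hℳ hN.1, hℳ.smul_mul]
  decompose x := by
    induction x using QuotientAddGroup.induction_on with | _ u => ?_
    obtain ⟨s, hs⟩ := hℳ.exists_sum_proj u
    refine ⟨s, fun γ => (hℳ.proj γ u : M ⧸ N), fun γ _ => ⟨_, hℳ.proj_mem γ u, rfl⟩, ?_⟩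
    conv_lhs => rw [← hs]
    exact map_sum (QuotientAddGroup.mk' N) _ s
  independent s cf hcf hsum γ hγ := by
    choose! z hz hzcf using hcf
    have hzN : ∑ δ ∈ s, z δ ∈ N := by
      rw [← QuotientAddGroup.eq_zero_iff, ← QuotientAddGroup.mk'_apply, map_sum, ← hsum]
      exact Finset.sum_congr rfl hzcf
    rw [← hzcf γ hγ, QuotientAddGroup.mk'_apply, QuotientAddGroup.eq_zero_iff,
      ← hℳ.proj_sum hz hγ]
    exact hN.proj_mem hℳ γ hzN
  smul_mem σ τ _ _ hm ha := by
    obtain ⟨u, hu, rfl⟩ := hm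
    exact ⟨_, hℳ.smul_mem σ τ hu ha, (quot_smul_mk hℳ hN.1 u _).symm⟩
  smul_eq_zero σ τ _ _ hh hm ha := by
    obtain ⟨u, hu, rfl⟩ := hm
    simp [QuotientAddGroup.mk'_apply, quot_smul_mk hℳ hN.1, hℳ.smul_eq_zero σ τ hh hu ha]
  smul_one σ _ hm := by
    obtain ⟨u, hu, rfl⟩ := hm
    simp [QuotientAddGroup.mk'_apply, quot_smul_mk hℳ hN.1, hℳ.smul_one σ hu]

theorem quot_proj_mk (hℳ : ℳ.IsGraded 𝒜) (hN : ℳ.IsGrSub N) (γ : GrIdx Γ) (u : M) :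
    (quot_isGraded hℳ hN).proj γ (u : M ⧸ N) = (hℳ.proj γ u : M ⧸ N) := by
  refine DFunLike.congr_fun (hℳ.addMonoidHom_ext
    (f := ((quot_isGraded hℳ hN).proj γ).comp (QuotientAddGroup.mk' N))
    (g := (QuotientAddGroup.mk' N).comp (hℳ.proj γ)) fun δ x hx => ?_) u
  have hx' : (x : M ⧸ N) ∈ (ℳ.quot N).component δ.2.2 := ⟨x, hx, rfl⟩
  by_cases h : δ = γ
  · subst h
    simp [(quot_isGraded hℳ hN).proj_of_mem hx', hℳ.proj_of_mem hx]
  · simp [(quot_isGraded hℳ hN).proj_of_mem_of_ne hx' h, hℳ.proj_of_mem_of_ne hx h]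

theorem isGrSub_map_mk' (hℳ : ℳ.IsGraded 𝒜) (hN : ℳ.IsGrSub N) {L : AddSubgroup M}
    (hL : ℳ.IsGrSub L) : (ℳ.quot N).IsGrSub (L.map (QuotientAddGroup.mk' N)) := by
  refine (isGrSub_iff (quot_isGraded hℳ hN)).2 ⟨?_, ?_⟩
  · rintro _ ⟨u, hu, rfl⟩ a
    exact ⟨_, hL.1 u hu a, (quot_smul_mk hℳ hN.1 u a).symm⟩
  · rintro γ _ ⟨u, hu, rfl⟩
    exact ⟨_, hL.proj_mem hℳ γ hu, (quot_proj_mk hℳ hN γ u).symm⟩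

theorem isGrSub_comap_mk' (hℳ : ℳ.IsGraded 𝒜) (hN : ℳ.IsGrSub N) {K : AddSubgroup (M ⧸ N)}
    (hK : (ℳ.quot N).IsGrSub K) : ℳ.IsGrSub (K.comap (QuotientAddGroup.mk' N)) := by
  refine (isGrSub_iff hℳ).2 ⟨fun m hm a => ?_, fun γ x hx => ?_⟩
  · rw [AddSubgroup.mem_comap, QuotientAddGroup.mk'_apply, ← quot_smul_mk hℳ hN.1]
    exact hK.1 _ hm a
  · rw [AddSubgroup.mem_comap, QuotientAddGroup.mk'_apply, ← quot_proj_mk hℳ hN]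
    exact hK.proj_mem (quot_isGraded hℳ hN) γ hx

/-! ### Gr-simple subquotients and supports -/

theorem isGrSimple_quot_iff (hℳ : ℳ.IsGraded 𝒜) (hN : ℳ.IsGrSub N) :
    (ℳ.quot N).IsGrSimple ↔ N ≠ ⊤ ∧ ∀ L, ℳ.IsGrSub L → N ≤ L → L = N ∨ L = ⊤ := by
  have hinj := AddSubgroup.comap_injective (QuotientAddGroup.mk'_surjective N)
  have hbot : (⊥ : AddSubgroup (M ⧸ N)).comap (QuotientAddGroup.mk' N) = N := by
    rw [AddMonoidHom.comap_bot, QuotientAddGroup.ker_mk']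
  refine and_congr (not_congr ?_) ⟨fun h L hL hNL => ?_, fun h K hK => ?_⟩
  · rw [← hinj.eq_iff, AddSubgroup.comap_top, hbot, eq_comm]
  · have hL' : (L.map (QuotientAddGroup.mk' N)).comap (QuotientAddGroup.mk' N) = L := by
      rw [AddSubgroup.comap_map_eq, QuotientAddGroup.ker_mk', sup_of_le_left hNL]
    rcases h _ (isGrSub_map_mk' hℳ hN hL) with h' | h'
    · exact .inl (by rw [← hL', h', hbot])
    · exact .inr (by rw [← hL', h', AddSubgroup.comap_top])
  · have hNK : N ≤ K.comap (QuotientAddGroup.mk' N) := by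
      simpa using AddSubgroup.ker_le_comap (QuotientAddGroup.mk' N) K
    rcases h _ (isGrSub_comap_mk' hℳ hN hK) hNK with h' | h'
    · exact .inl (hinj (h'.trans hbot.symm))
    · exact .inr (hinj (h'.trans (AddSubgroup.comap_top _).symm))

theorem isGrSimple_subquot_iff_covBy (hℳ : ℳ.IsGraded 𝒜) (hN : ℳ.IsGrSub N)
    (hP : ℳ.IsGrSub P) (hNP : N ≤ P) :
    (ℳ.subquot N P).IsGrSimple ↔ (⟨N, hN⟩ : grSublattice hℳ) ⋖ ⟨P, hP⟩ := by
  rw [subquot, isGrSimple_quot_iff (restrict_isGraded hℳ hP) (isGrSub_addSubgroupOf hℳ hP hN),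
    covBy_iff_lt_and_eq_or_eq, Ne, AddSubgroup.addSubgroupOf_eq_top, ← Subtype.coe_lt_coe,
    lt_iff_le_not_ge]
  refine and_congr (iff_and_self.mpr fun _ => hNP) ⟨fun h L hNL hLP => ?_, fun h L' hL' hNL' => ?_⟩
  · have hNL' : N.addSubgroupOf P ≤ L.1.addSubgroupOf P := AddSubgroup.addSubgroupOf_mono _ hNL
    rcases h _ (isGrSub_addSubgroupOf hℳ hP L.2) hNL' with h' | h'
    · refine .inl (Subtype.ext ?_)
      rwa [AddSubgroup.addSubgroupOf_inj, inf_of_le_left hNP,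
        inf_of_le_left (show L.1 ≤ P from hLP)] at h'
    · exact .inr (Subtype.ext (le_antisymm hLP (AddSubgroup.addSubgroupOf_eq_top.mp h')))
  · have hL : L' = (L'.map P.subtype).addSubgroupOf P :=
      (AddSubgroup.comap_map_eq_self_of_injective P.subtype_injective L').symm
    have hNL : N ≤ L'.map P.subtype := fun x hx => ⟨⟨x, hNP hx⟩, hNL' hx, rfl⟩
    rcases h ⟨_, isGrSub_map_subtype hP hL'⟩ hNL (AddSubgroup.map_subtype_le L') with h' | h'
    · exact .inl (hL.trans (congrArg (AddSubgroup.addSubgroupOf · P) (congrArg Subtype.val h')))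
    · refine .inr (hL.trans ?_)
      rw [show L'.map P.subtype = P from congrArg Subtype.val h', AddSubgroup.addSubgroupOf_self]

theorem partSupport_subquot (hℳ : ℳ.IsGraded 𝒜) (hP : ℳ.IsGrSub P) (hNP : N ≤ P) :
    (ℳ.subquot N P).partSupport = ℳ.diffSupport N P := by
  ext e
  refine not_congr ?_
  change ⨆ (f : Γ) (σ : f ⟶ e), (ℳ.subquot N P).component σ = ⊥ ↔ _
  simp only [iSup₂_eq_bot, subquot, quot, restrict, AddSubgroup.map_eq_bot_iff,
    QuotientAddGroup.ker_mk', AddSubgroup.addSubgroupOf_le_addSubgroupOf_iff]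
  rw [← inf_part_le_iff hℳ hP]
  exact ⟨fun h => le_antisymm (inf_le_inf_right _ hNP) (le_inf h inf_le_right),
    fun h => h ▸ inf_le_left⟩

theorem eq_of_diffSupport_eq_empty (hℳ : ℳ.IsGraded 𝒜) (hN : ℳ.IsGrSub N) (hP : ℳ.IsGrSub P)
    (h : ℳ.diffSupport N P = ∅) : N = P := by
  have heq : ∀ e, N ⊓ ℳ.part e = P ⊓ ℳ.part e := fun e =>
    not_not.mp (Set.eq_empty_iff_forall_notMem.mp h e)
  exact le_antisymm (le_of_forall_inf_part_le hℳ hN fun e => (heq e).le.trans inf_le_left)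
    (le_of_forall_inf_part_le hℳ hP fun e => (heq e).ge.trans inf_le_left)

theorem diffSupport_eq_singleton (hℳ : ℳ.IsGraded 𝒜) {e : Γ} (hN : N ≤ ℳ.part e)
    (hP : P ≤ ℳ.part e) (hNP : N ≠ P) : ℳ.diffSupport N P = {e} := by
  ext e'
  rcases eq_or_ne e' e with rfl | he
  · simpa [diffSupport, inf_of_le_left hN, inf_of_le_left hP] using hNP
  · have h : ∀ {Q : AddSubgroup M}, Q ≤ ℳ.part e → Q ⊓ ℳ.part e' = ⊥ := fun hQ =>
      eq_bot_iff.2 ((inf_le_inf_right _ hQ).trans (part_inf_part_eq_bot hℳ he.symm).le)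
    simp [diffSupport, h hN, h hP, he]

theorem iSup_inf_part (hℳ : ℳ.IsGraded 𝒜) {ι : Type*} {E : ι → Γ} {W : ι → AddSubgroup M}
    (hW : ∀ k, ℳ.IsGrSub (W k)) (hWE : ∀ k, W k ≤ ℳ.part (E k)) (e : Γ) :
    (⨆ k, W k) ⊓ ℳ.part e = ⨆ (k) (_ : E k = e), W k := by
  refine le_antisymm (fun x hx => ?_) (iSup₂_le fun k hk => le_inf (le_iSup W k) (hk ▸ hWE k))
  obtain ⟨s, hs⟩ := hℳ.exists_sum_proj x
  rw [← hs]
  refine AddSubgroup.sum_mem _ fun γ _ => ?_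
  by_cases hγ : γ.2.1 = e
  · subst hγ
    refine (iSup_le fun k y hy => ?_ :
      ⨆ k, W k ≤ (⨆ (k) (_ : E k = γ.2.1), W k).comap (hℳ.proj γ)) hx.1
    by_cases hk : E k = γ.2.1
    · exact AddSubgroup.mem_iSup_of_mem k (AddSubgroup.mem_iSup_of_mem hk
        ((hW k).proj_mem hℳ γ hy))
    · simp [hℳ.proj_eq_zero_of_mem_part (hWE k hy) (Ne.symm hk)]
  · simp [hℳ.proj_eq_zero_of_mem_part hx.2 hγ]

theorem diffSupport_iSup (hℳ : ℳ.IsGraded 𝒜) {E : ℕ → Γ} (hE : Function.Injective E)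
    {V W : ℕ → AddSubgroup M} (hV : ∀ k, ℳ.IsGrSub (V k)) (hW : ∀ k, ℳ.IsGrSub (W k))
    (hVE : ∀ k, V k ≤ ℳ.part (E k)) (hWE : ∀ k, W k ≤ ℳ.part (E k)) :
    ℳ.diffSupport (⨆ k, V k) (⨆ k, W k) = E '' {k | V k ≠ W k} := by
  ext e
  simp only [diffSupport, Set.mem_ofPred_eq, iSup_inf_part hℳ hV hVE, iSup_inf_part hℳ hW hWE,
    Set.mem_image]
  by_cases he : e ∈ Set.range E
  · obtain ⟨k, rfl⟩ := he
    simp [hE.eq_iff]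
  · simp_all

theorem IsGrCompSeries.length_le (hℳ : ℳ.IsGraded 𝒜) {m : ℕ} {cc : ℕ → AddSubgroup M}
    (hcc : ℳ.IsGrCompSeries m cc) {d : ℕ → AddSubgroup M} (hd : ∀ j, ℳ.IsGrSub (d j)) {k : ℕ}
    (hlt : ∀ j < k, d j < d (j + 1)) : k ≤ m := by
  obtain ⟨hc0, hcm, hgr, hmono, hsimple⟩ := hcc
  let c : ℕ → grSublattice hℳ := fun i => ⟨cc (min i m), hgr _ (min_le_right i m)⟩
  have hc : ∀ i (hi : i ≤ m), c i = ⟨cc i, hgr i hi⟩ := fun i hi => Subtype.ext (by simp [c, hi])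
  refine length_le_of_covBy (c := c) (d := fun j => ⟨d j, hd j⟩) (fun i hi => ?_) hlt ?_ ?_
  · rw [hc i hi.le, hc (i + 1) hi]
    exact (isGrSimple_subquot_iff_covBy hℳ _ _ (hmono i hi)).mp (hsimple i hi)
  · show cc (min 0 m) ≤ d 0
    simp [hc0]
  · show d k ≤ cc (min m m)
    simp [hcm]

theorem IsGrCompSeries.length_le_of_anti (hℳ : ℳ.IsGraded 𝒜) {m : ℕ} {cc : ℕ → AddSubgroup M}
    (hcc : ℳ.IsGrCompSeries m cc) {d : ℕ → AddSubgroup M} (hd : ∀ j, ℳ.IsGrSub (d j)) {k : ℕ}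
    (hlt : ∀ j < k, d (j + 1) < d j) : k ≤ m :=
  hcc.length_le hℳ (fun j => hd (k - j)) fun j hj => by
    simpa [show k - j = k - (j + 1) + 1 by omega] using hlt (k - (j + 1)) (by omega)

theorem exists_isGrCompSeries_of_length_le (hℳ : ℳ.IsGraded 𝒜) {L : ℕ}
    (h : ∀ d : ℕ → AddSubgroup M, (∀ j, ℳ.IsGrSub (d j)) →
      ∀ k, (∀ j < k, d j < d (j + 1)) → k ≤ L) :
    ∃ m ≤ L, ∃ cc : ℕ → AddSubgroup M, ℳ.IsGrCompSeries m cc := by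
  obtain ⟨c, hc0, m, hmL, hcm, hcov⟩ := exists_covBy_seq_of_forall_length_le
    (α := grSublattice hℳ) (fun d k hd => h (fun j => d j) (fun j => (d j).property) k hd)
    (show (⟨⊥, isGrSub_bot hℳ⟩ : grSublattice hℳ) ≤ ⟨⊤, isGrSub_top hℳ⟩ from
      Subtype.mk_le_mk.mpr bot_le)
  exact ⟨m, hmL, fun i => c i, congrArg Subtype.val hc0, congrArg Subtype.val hcm,
    fun i _ => (c i).2, fun i hi => (hcov i hi).le,
    fun i hi => (isGrSimple_subquot_iff_covBy hℳ _ _ (hcov i hi).le).mpr (hcov i hi)⟩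

/-! ### Tight chains -/

theorem tightDesc_iff (hℳ : ℳ.IsGraded 𝒜) {c : ℕ → AddSubgroup M} :
    ℳ.TightDesc c ↔ (∀ i, ℳ.IsGrSub (c i)) ∧ Antitone c ∧ Antitone (ℳ.stepSupport c) := by
  refine and_congr_right fun hc => ?_
  have hsupp : ∀ i, c (i + 1) ≤ c i →
      (ℳ.subquot (c (i + 1)) (c i)).partSupport = ℳ.stepSupport c i :=
    fun i h => (partSupport_subquot hℳ (hc i) h).trans diffSupport_comm
  constructor
  · rintro ⟨hanti, htight⟩
    refine ⟨antitone_nat_of_succ_le hanti, antitone_nat_of_succ_le fun i => ?_⟩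
    simpa only [hsupp _ (hanti _)] using htight i
  · rintro ⟨hanti, htight⟩
    refine ⟨fun i => hanti i.le_succ, fun i => ?_⟩
    simpa only [hsupp _ (hanti (Nat.le_succ _))] using htight i.le_succ

theorem tightAsc_iff (hℳ : ℳ.IsGraded 𝒜) {c : ℕ → AddSubgroup M} :
    ℳ.TightAsc c ↔ (∀ i, ℳ.IsGrSub (c i)) ∧ Monotone c ∧ Antitone (ℳ.stepSupport c) := by
  refine and_congr_right fun hc => ?_
  have hsupp : ∀ i, c i ≤ c (i + 1) →
      (ℳ.subquot (c i) (c (i + 1))).partSupport = ℳ.stepSupport c i :=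
    fun i h => partSupport_subquot hℳ (hc (i + 1)) h
  constructor
  · rintro ⟨hmono, htight⟩
    refine ⟨monotone_nat_of_le_succ hmono, antitone_nat_of_succ_le fun i => ?_⟩
    simpa only [hsupp _ (hmono _)] using htight i
  · rintro ⟨hmono, htight⟩
    refine ⟨fun i => hmono i.le_succ, fun i => ?_⟩
    simpa only [hsupp _ (hmono (Nat.le_succ _))] using htight i.le_succ

theorem stepSupport_map_subtype (hℳ : ℳ.IsGraded 𝒜) {e : Γ} {d : ℕ → AddSubgroup (ℳ.part e)}
    (hd : ∀ n, d n ≠ d (n + 1)) :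
    ℳ.stepSupport (fun n => (d n).map (ℳ.part e).subtype) = fun _ => {e} :=
  funext fun n => diffSupport_eq_singleton hℳ (AddSubgroup.map_subtype_le _)
    (AddSubgroup.map_subtype_le _)
    ((AddSubgroup.map_injective (ℳ.part e).subtype_injective).ne (hd n))

theorem g0Artinian_of_stronglyG0Artinian (h𝒜 : 𝒜.IsObjectUnital) (hℳ : ℳ.IsGraded 𝒜)
    (h : ℳ.StronglyG0Artinian) : ℳ.G0Artinian := by
  rintro e ⟨d, hd, hlt⟩
  have hc := stepSupport_map_subtype hℳ fun n => (hlt n).ne'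
  obtain ⟨n, hn⟩ := h _ ((tightDesc_iff hℳ).2
    ⟨fun n => isGrSub_map_subtype (part_isGrSub h𝒜 hℳ e) (hd n),
      antitone_nat_of_succ_le fun n => AddSubgroup.map_mono (hlt n).le, hc ▸ antitone_const⟩)
  exact (hlt n).ne (AddSubgroup.map_injective (ℳ.part e).subtype_injective
    (hn (n + 1) n.le_succ))

theorem g0Noetherian_of_stronglyG0Noetherian (h𝒜 : 𝒜.IsObjectUnital) (hℳ : ℳ.IsGraded 𝒜)
    (h : ℳ.StronglyG0Noetherian) : ℳ.G0Noetherian := by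
  rintro e ⟨d, hd, hlt⟩
  have hc := stepSupport_map_subtype hℳ fun n => (hlt n).ne
  obtain ⟨n, hn⟩ := h _ ((tightAsc_iff hℳ).2
    ⟨fun n => isGrSub_map_subtype (part_isGrSub h𝒜 hℳ e) (hd n),
      monotone_nat_of_le_succ fun n => AddSubgroup.map_mono (hlt n).le, hc ▸ antitone_const⟩)
  exact (hlt n).ne' (AddSubgroup.map_injective (ℳ.part e).subtype_injective
    (hn (n + 1) n.le_succ))

theorem exists_forall_ge_eq_of_antitone_stepSupport (hℳ : ℳ.IsGraded 𝒜)
    {c : ℕ → AddSubgroup M} (hc : ∀ i, ℳ.IsGrSub (c i)) (htight : Antitone (ℳ.stepSupport c))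
    {Δ : Set Γ} (hΔ : (Δᶜ : Set Γ).Finite) {n₀ : ℕ} (hn₀ : ∀ e ∈ Δ, e ∉ ℳ.stepSupport c n₀)
    (hjump : ∀ e, ∃ i, e ∉ ℳ.stepSupport c i) : ∃ n, ∀ m, n ≤ m → c m = c n := by
  by_cases hempty : ∃ i, ℳ.stepSupport c i = ∅
  · obtain ⟨i, hi⟩ := hempty
    refine ⟨i, fun m hm => ?_⟩
    induction m, hm using Nat.le_induction with
    | base => rfl
    | succ m hm ih =>
      rw [← ih]
      exact (eq_of_diffSupport_eq_empty hℳ (hc m) (hc (m + 1))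
        (Set.subset_empty_iff.mp (hi ▸ htight hm))).symm
  -- the step supports are nested, nonempty, and from step `n₀` on contained in the finite `Δᶜ`
  · obtain ⟨e, he⟩ := Set.nonempty_iInter_of_antitone htight
      (fun i => Set.nonempty_iff_ne_empty.2 fun h => hempty ⟨i, h⟩)
      (hΔ.subset fun e he heΔ => hn₀ e heΔ he)
    obtain ⟨i, hi⟩ := hjump e
    exact absurd (Set.mem_iInter.mp he i) hi

theorem stronglyG0Artinian_of_boundedPartLength (h𝒜 : 𝒜.IsObjectUnital) (hℳ : ℳ.IsGraded 𝒜)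
    (hart : ℳ.G0Artinian) (hbd : ℳ.BoundedPartLength) : ℳ.StronglyG0Artinian := by
  obtain ⟨Δ, n₀, hΔ, hlen⟩ := hbd
  intro c hc
  obtain ⟨hgr, hanti, htight⟩ := (tightDesc_iff hℳ).1 hc
  have htrace : ∀ e i, e ∈ ℳ.stepSupport c i →
      (c (i + 1)).addSubgroupOf (ℳ.part e) < (c i).addSubgroupOf (ℳ.part e) := fun e i he =>
    addSubgroupOf_part_lt (hanti i.le_succ) (diffSupport_comm (ℳ := ℳ) ▸ he)
  have hgr' := fun e j => isGrSub_addSubgroupOf hℳ (part_isGrSub h𝒜 hℳ e) (hgr j)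
  refine exists_forall_ge_eq_of_antitone_stepSupport hℳ hgr htight hΔ (n₀ := n₀)
    (fun e he hmem => ?_) (fun e => ?_)
  · obtain ⟨m, hm, cc, hcc⟩ := hlen e he
    have := hcc.length_le_of_anti (restrict_isGraded hℳ (part_isGrSub h𝒜 hℳ e)) (hgr' e)
      (k := n₀ + 1) fun j hj => htrace e j (htight (by omega) hmem)
    omega
  · by_contra! h
    exact hart e ⟨_, hgr' e, fun j => htrace e j (h j)⟩

theorem stronglyG0Noetherian_of_boundedPartLength (h𝒜 : 𝒜.IsObjectUnital)
    (hℳ : ℳ.IsGraded 𝒜) (hnoe : ℳ.G0Noetherian) (hbd : ℳ.BoundedPartLength) :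
    ℳ.StronglyG0Noetherian := by
  obtain ⟨Δ, n₀, hΔ, hlen⟩ := hbd
  intro c hc
  obtain ⟨hgr, hmono, htight⟩ := (tightAsc_iff hℳ).1 hc
  have htrace : ∀ e i, e ∈ ℳ.stepSupport c i →
      (c i).addSubgroupOf (ℳ.part e) < (c (i + 1)).addSubgroupOf (ℳ.part e) := fun e i he =>
    addSubgroupOf_part_lt (hmono i.le_succ) he
  have hgr' := fun e j => isGrSub_addSubgroupOf hℳ (part_isGrSub h𝒜 hℳ e) (hgr j)
  refine exists_forall_ge_eq_of_antitone_stepSupport hℳ hgr htight hΔ (n₀ := n₀)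
    (fun e he hmem => ?_) (fun e => ?_)
  · obtain ⟨m, hm, cc, hcc⟩ := hlen e he
    have := hcc.length_le (restrict_isGraded hℳ (part_isGrSub h𝒜 hℳ e)) (hgr' e)
      (k := n₀ + 1) fun j hj => htrace e j (htight (by omega) hmem)
    omega
  · by_contra! h
    exact hnoe e ⟨_, hgr' e, fun j => htrace e j (h j)⟩

theorem exists_long_chains_of_not_boundedPartLength (h𝒜 : 𝒜.IsObjectUnital)
    (hℳ : ℳ.IsGraded 𝒜) (h : ¬ ℳ.BoundedPartLength) :
    ∃ E : ℕ → Γ, Function.Injective E ∧ ∃ T : ℕ → ℕ → AddSubgroup M,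
      (∀ k j, ℳ.IsGrSub (T k j)) ∧ (∀ k j, T k j ≤ ℳ.part (E k)) ∧ (∀ k, Monotone (T k)) ∧
      ∀ k j, T k j ≠ T k (j + 1) ↔ j < k := by
  have hinf : ∀ n, {e | ∃ d : ℕ → AddSubgroup (ℳ.part e),
      (∀ j, (ℳ.restrict (ℳ.part e)).IsGrSub (d j)) ∧ ∀ j < n, d j < d (j + 1)}.Infinite := by
    refine fun n hfin => h ⟨_, n, by rwa [compl_compl], fun e he => ?_⟩
    refine exists_isGrCompSeries_of_length_le (restrict_isGraded hℳ (part_isGrSub h𝒜 hℳ e))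
      fun d hd k hk => ?_
    by_contra! hnk
    exact he ⟨d, hd, fun j hj => hk j (by omega)⟩
  obtain ⟨E, hE, hmem⟩ := Set.exists_injective_forall_mem hinf
  choose d hd hlt using hmem
  have hdmono : ∀ k, MonotoneOn (d k) (Set.Iic k) := fun k =>
    (strictMonoOn_Iic_of_lt_succ fun j hj => by simpa using hlt k j hj).monotoneOn
  refine ⟨E, hE, fun k j => (d k (min j k)).map (ℳ.part (E k)).subtype,
    fun k j => isGrSub_map_subtype (part_isGrSub h𝒜 hℳ _) (hd k _),
    fun k j => AddSubgroup.map_subtype_le _, fun k i j hij => AddSubgroup.map_mono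
      (hdmono k (min_le_right i k) (min_le_right j k) (min_le_min_right k hij)), fun k j => ?_⟩
  rw [Ne, (AddSubgroup.map_injective (ℳ.part (E k)).subtype_injective).eq_iff]
  rcases lt_or_ge j k with hjk | hjk
  · simp [min_eq_left hjk.le, (hlt k j hjk).ne, hjk]
  · simp [min_eq_right (hjk.trans j.le_succ), hjk]

theorem stepSupport_iSup (hℳ : ℳ.IsGraded 𝒜) {E : ℕ → Γ} (hE : Function.Injective E)
    {W : ℕ → ℕ → AddSubgroup M} (hW : ∀ i k, ℳ.IsGrSub (W i k))
    (hWE : ∀ i k, W i k ≤ ℳ.part (E k)) (hstep : ∀ i k, W i k ≠ W (i + 1) k ↔ i < k) (i : ℕ) :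
    ℳ.stepSupport (fun i => ⨆ k, W i k) i = E '' Set.Ioi i := by
  rw [stepSupport, diffSupport_iSup hℳ hE (hW i) (hW (i + 1)) (hWE i) (hWE (i + 1))]
  simp only [hstep]
  rfl

theorem boundedPartLength_of_stronglyG0Artinian (h𝒜 : 𝒜.IsObjectUnital) (hℳ : ℳ.IsGraded 𝒜)
    (h : ℳ.StronglyG0Artinian) : ℳ.BoundedPartLength := by
  by_contra hbd
  obtain ⟨E, hE, T, hT, hTE, hTmono, hTne⟩ :=
    exists_long_chains_of_not_boundedPartLength h𝒜 hℳ hbd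
  -- the chains `T k`, run backwards and staggered: step `i` jumps exactly at the `E k`, `i < k`
  have hstep : ∀ i k, T k (k - i) ≠ T k (k - (i + 1)) ↔ i < k := fun i k => by
    rcases lt_or_ge i k with hik | hik
    · rw [show k - i = k - (i + 1) + 1 by omega, ne_comm, hTne]
      simp only [hik, iff_true]
      omega
    · simp [Nat.sub_eq_zero_of_le hik, Nat.sub_eq_zero_of_le (hik.trans i.le_succ), hik]
  have hsupp := stepSupport_iSup hℳ hE (fun i k => hT k _) (fun i k => hTE k _) hstep
  obtain ⟨n, hn⟩ := h _ ((tightDesc_iff hℳ).2 ⟨fun i => isGrSub_iSup hℳ fun k => hT k _,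
    fun i j hij => iSup_mono fun k => hTmono k (Nat.sub_le_sub_left hij k),
    fun i j hij => by simpa only [hsupp] using Set.image_mono (Set.Ioi_subset_Ioi hij)⟩)
  have hmem : E (n + 1) ∈ ℳ.stepSupport (fun i => ⨆ k, T k (k - i)) n := by
    rw [hsupp]
    exact Set.mem_image_of_mem E n.lt_succ_self
  exact ne_of_mem_stepSupport hmem (hn (n + 1) n.le_succ).symm

theorem boundedPartLength_of_stronglyG0Noetherian (h𝒜 : 𝒜.IsObjectUnital)
    (hℳ : ℳ.IsGraded 𝒜) (h : ℳ.StronglyG0Noetherian) : ℳ.BoundedPartLength := by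
  by_contra hbd
  obtain ⟨E, hE, T, hT, hTE, hTmono, hTne⟩ :=
    exists_long_chains_of_not_boundedPartLength h𝒜 hℳ hbd
  have hsupp := stepSupport_iSup hℳ hE (fun i k => hT k i) (fun i k => hTE k i)
    fun i k => hTne k i
  obtain ⟨n, hn⟩ := h _ ((tightAsc_iff hℳ).2 ⟨fun i => isGrSub_iSup hℳ fun k => hT k i,
    fun i j hij => iSup_mono fun k => hTmono k hij,
    fun i j hij => by simpa only [hsupp] using Set.image_mono (Set.Ioi_subset_Ioi hij)⟩)
  have hmem : E (n + 1) ∈ ℳ.stepSupport (fun i => ⨆ k, T k i) n := by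
    rw [hsupp]
    exact Set.mem_image_of_mem E n.lt_succ_self
  exact ne_of_mem_stepSupport hmem (hn (n + 1) n.le_succ).symm

end GModData

/-- Let `R` be a `Γ`-graded ring and `M` a `Γ`-graded right
`R`-module. Then `M` is strongly `Γ₀`-artinian (resp. strongly `Γ₀`-noetherian)
iff `M` is `Γ₀`-artinian (resp. `Γ₀`-noetherian) and there exist `Δ₀ ⊆ Γ₀` and
`n₀ ∈ ℕ` with `Γ₀ \ Δ₀` finite and, for every `e ∈ Δ₀`, `M(e)` of finite
gr-length at most `n₀`. -/
theorem stronglyG0_iff_G0_and_bounded_length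
    {Γ : Type u} [Groupoid.{u} Γ] {R : Type u} [AddCommGroup R] {M : Type u}
    [AddCommGroup M] (𝒜 : GRingData Γ R) (h𝒜 : 𝒜.IsObjectUnital)
    (ℳ : GModData Γ R M) (hℳ : ℳ.IsGraded 𝒜) :
    (ℳ.StronglyG0Artinian ↔ ℳ.G0Artinian ∧
      ∃ (Δ : Set Γ) (n₀ : ℕ), (Δᶜ : Set Γ).Finite ∧
        ∀ e ∈ Δ, ∃ m ≤ n₀, ∃ cc : ℕ → AddSubgroup ↥(ℳ.part e),
          (ℳ.restrict (ℳ.part e)).IsGrCompSeries m cc) ∧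
    (ℳ.StronglyG0Noetherian ↔ ℳ.G0Noetherian ∧
      ∃ (Δ : Set Γ) (n₀ : ℕ), (Δᶜ : Set Γ).Finite ∧
        ∀ e ∈ Δ, ∃ m ≤ n₀, ∃ cc : ℕ → AddSubgroup ↥(ℳ.part e),
          (ℳ.restrict (ℳ.part e)).IsGrCompSeries m cc) := by
  exact ⟨⟨fun h => ⟨GModData.g0Artinian_of_stronglyG0Artinian h𝒜 hℳ h,
      GModData.boundedPartLength_of_stronglyG0Artinian h𝒜 hℳ h⟩,
    fun ⟨hart, hbd⟩ => GModData.stronglyG0Artinian_of_boundedPartLength h𝒜 hℳ hart hbd⟩,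
    ⟨fun h => ⟨GModData.g0Noetherian_of_stronglyG0Noetherian h𝒜 hℳ h,
      GModData.boundedPartLength_of_stronglyG0Noetherian h𝒜 hℳ h⟩,
    fun ⟨hnoe, hbd⟩ => GModData.stronglyG0Noetherian_of_boundedPartLength h𝒜 hℳ hnoe hbd⟩⟩
end
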